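/- arXiv:2006.06914 — 8 statements merged into one kernel-verified Lean document; each statement's English description precedes it below -/
import Mathlib

section
/- Let (δ_t)_{t=1}^{T} be a sequence of nonnegative reals with δ_{t_0+1} ≤ 2Lη_{t_0} for some index t_0, and suppose that for all t ≥ t_0+1, δ_t² ≤ 4L² Σ_{s=t_0}^{t-1} η_s² + 2 Σ_{s=t_0+1}^{t-1} η_s a_s δ_s, where L ≥ 0, η_s ≥ 0 and 0 ≤ a_s ≤ 2L. Then for all t ∈ [T], δ_t ≤ 2L √(Σ_{s=t_0}^{t-1} η_s²) + 2 Σ_{s=t_0+1}^{t-1} η_s a_s. -/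
/-!
Strong induction on `t`. Bounding every earlier `δ s` by the current bound `B = c t + 2 W`, where
`W = ∑ w s`, turns the recurrence into `δ t ^ 2 ≤ c t ^ 2 + 2 W B ≤ B ^ 2`.
-/

open Finset

theorem le_add_two_mul_of_sq_le {x c y : ℝ} (hc : 0 ≤ c) (hy : 0 ≤ y)
    (h : x ^ 2 ≤ c ^ 2 + 2 * y * (c + 2 * y)) : x ≤ c + 2 * y :=
  le_of_sq_le_sq (by nlinarith [mul_nonneg hc hy]) (by positivity)

theorem le_add_two_mul_sum_of_sq_le_sq_add_two_mul_sum {m T : ℕ} {δ c w : ℕ → ℝ}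
    (hc : Monotone c) (hc₀ : ∀ t, 0 ≤ c t) (hw : ∀ s, 0 ≤ w s)
    (hrec : ∀ t, m ≤ t → t ≤ T → δ t ^ 2 ≤ c t ^ 2 + 2 * ∑ s ∈ Ico m t, w s * δ s) :
    ∀ t, m ≤ t → t ≤ T → δ t ≤ c t + 2 * ∑ s ∈ Ico m t, w s := by
  intro t
  induction t using Nat.strong_induction_on with
  | _ t ih =>
  intro hmt htT
  set W := ∑ s ∈ Ico m t, w s
  have hbound : ∀ s ∈ Ico m t, δ s ≤ c t + 2 * W := by
    intro s hs
    obtain ⟨hms, hst⟩ := mem_Ico.1 hs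
    calc δ s ≤ c s + 2 * ∑ u ∈ Ico m s, w u := ih s hst hms (by omega)
      _ ≤ c t + 2 * W := by
        gcongr
        · exact hc hst.le
        · exact sum_le_sum_of_subset_of_nonneg (Ico_subset_Ico_right hst.le) fun u _ _ => hw u
  have hsum : ∑ s ∈ Ico m t, w s * δ s ≤ W * (c t + 2 * W) := by
    rw [sum_mul]
    exact sum_le_sum fun s hs => mul_le_mul_of_nonneg_left (hbound s hs) (hw s)
  refine le_add_two_mul_of_sq_le (hc₀ t) (sum_nonneg fun s _ => hw s) ?_
  linarith [hrec t hmt htT]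

theorem stmt0_general (T t0 : ℕ) (L : ℝ) (hL : 0 ≤ L)
    (δ η a : ℕ → ℝ)
    (hη : ∀ t, 0 ≤ η t)
    (ha : ∀ t, 0 ≤ a t ∧ a t ≤ 2 * L)
    (hzero : ∀ t ≤ t0, δ t = 0)
    (hrec : ∀ t, t0 + 1 ≤ t → t ≤ T →
      δ t ^ 2 ≤ 4 * L ^ 2 * ∑ s ∈ Finset.Icc t0 (t - 1), η s ^ 2
        + 2 * ∑ s ∈ Finset.Icc (t0 + 1) (t - 1), η s * a s * δ s) :
    ∀ t, 1 ≤ t → t ≤ T →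
      δ t ≤ 2 * L * Real.sqrt (∑ s ∈ Finset.Icc t0 (t - 1), η s ^ 2)
        + 2 * ∑ s ∈ Finset.Icc (t0 + 1) (t - 1), η s * a s := by
  intro t _ htT
  have hηa : ∀ s, 0 ≤ η s * a s := fun s => mul_nonneg (hη s) (ha s).1
  rcases le_or_gt t t0 with hle | hgt
  · rw [hzero t hle]
    have := sum_nonneg fun s (_ : s ∈ Icc (t0 + 1) (t - 1)) => hηa s
    positivity
  set c : ℕ → ℝ := fun t => 2 * L * Real.sqrt (∑ s ∈ Icc t0 (t - 1), η s ^ 2)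
  have hc : Monotone c := fun s t hst => by
    dsimp only [c]
    gcongr
  have hc_sq : ∀ t, c t ^ 2 = 4 * L ^ 2 * ∑ s ∈ Icc t0 (t - 1), η s ^ 2 := fun t => by
    rw [mul_pow, Real.sq_sqrt (sum_nonneg fun s _ => sq_nonneg _)]
    ring
  have hIco : ∀ t, t0 + 1 ≤ t → Icc (t0 + 1) (t - 1) = Ico (t0 + 1) t := fun t ht =>
    Icc_sub_one_right_eq_Ico_of_not_isMin (not_isMin_iff_ne_bot.2 (Nat.ne_zero_of_lt ht)) _
  rw [hIco t hgt]
  refine le_add_two_mul_sum_of_sq_le_sq_add_two_mul_sum hc (fun _ => by positivity) hηa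
    (fun t ht htT => ?_) t hgt htT
  rw [hc_sq, ← hIco t ht]
  exact hrec t ht htT

/-- Inductive core of the basic stability lemma: solving the quadratic recurrence. -/
theorem stmt0 (T t0 : ℕ) (L : ℝ) (hL : 0 ≤ L)
    (δ η a : ℕ → ℝ)
    (hδ : ∀ t, 0 ≤ δ t) (hη : ∀ t, 0 ≤ η t)
    (ha : ∀ t, 0 ≤ a t ∧ a t ≤ 2 * L)
    (hzero : ∀ t ≤ t0, δ t = 0)
    (hstart : δ (t0 + 1) ≤ 2 * L * η t0)
    (hrec : ∀ t, t0 + 1 ≤ t → t ≤ T →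
      δ t ^ 2 ≤ 4 * L ^ 2 * ∑ s ∈ Finset.Icc t0 (t - 1), η s ^ 2
        + 2 * ∑ s ∈ Finset.Icc (t0 + 1) (t - 1), η s * a s * δ s) :
    ∀ t, 1 ≤ t → t ≤ T →
      δ t ≤ 2 * L * Real.sqrt (∑ s ∈ Finset.Icc t0 (t - 1), η s ^ 2)
        + 2 * ∑ s ∈ Finset.Icc (t0 + 1) (t - 1), η s * a s :=
  stmt0_general T t0 L hL δ η a hη ha hzero hrec
end

section
/- Let X ⊆ ℝ^d be a closed convex set and let (x^t), (y^t) be two projected gradient descent trajectories with x^1 = y^1, step sizes η_t ≥ 0, run on convex L-Lipschitz functions f_t and f_t' respectively, i.e. x^{t+1} = Proj_X(x^t − η_t g_t) and y^{t+1} = Proj_X(y^t − η_t g_t') with g_t ∈ ∂f_t(x^t), g_t' ∈ ∂f_t'(y^t). Suppose for every t there is a subgradient h_t ∈ ∂f_t'(x^t) with ‖g_t − h_t‖ ≤ a_t where 0 ≤ a_t ≤ 2L, and let t_0 = inf{t : f_t ≠ f_t'}. Then ‖x^T − y^T‖ ≤ 2L √(Σ_{t=t_0}^{T-1} η_t²)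 + 2 Σ_{t=t_0+1}^{T-1} η_t a_t. -/
/-!
Projection onto a convex set is nonexpansive, so `δ t = ‖x t - y t‖` obeys
`δ (t+1) ≤ ‖(x t - y t) - η t • (g t - g' t)‖`. Expanding the square, the cross term is split as
`⟪g - h, x - y⟫ + ⟪h - g', x - y⟫`: the first is at least `-a δ` by Cauchy–Schwarz, the second is
nonnegative by monotonicity of the subdifferential of `f' t`, and `‖g - g'‖ ≤ 2L`. This gives the
quadratic recurrence `δ (t+1)² ≤ δ t² + 2 η a δ t + 4 L² η²`, and the bound follows by induction
from the last time at which the trajectories still coincide.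
-/

open scoped InnerProductSpace
open Finset

section InnerProductSpace

variable {E : Type*} [NormedAddCommGroup E] [InnerProductSpace ℝ E]

def IsNearestPointMap (K : Set E) (P : E → E) : Prop :=
  ∀ u, P u ∈ K ∧ ∀ w ∈ K, ‖P u - u‖ ≤ ‖w - u‖

namespace IsNearestPointMap

variable {K : Set E} {P : E → E}

theorem inner_sub_nonpos (hP : IsNearestPointMap K P) (hK : Convex ℝ K) (u : E) {w : E}
    (hw : w ∈ K) : ⟪u - P u, w - P u⟫_ℝ ≤ 0 := by
  obtain ⟨hPu, hmin⟩ := hP u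
  have : Nonempty K := ⟨⟨P u, hPu⟩⟩
  have hinf : ‖u - P u‖ = ⨅ v : K, ‖u - v‖ := by
    refine le_antisymm (le_ciInf fun v => ?_) ?_
    · simpa only [norm_sub_rev u] using hmin v v.2
    · exact ciInf_le ⟨0, fun _ ⟨_, h⟩ => h ▸ norm_nonneg _⟩ (⟨P u, hPu⟩ : K)
  exact (norm_eq_iInf_iff_real_inner_le_zero hK hPu).1 hinf w hw

theorem norm_sub_sq_le_inner (hP : IsNearestPointMap K P) (hK : Convex ℝ K) (u v : E) :
    ‖P u - P v‖ ^ 2 ≤ ⟪u - v, P u - P v⟫_ℝ := by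
  have hu := hP.inner_sub_nonpos hK u (hP v).1
  have hv := hP.inner_sub_nonpos hK v (hP u).1
  rw [← real_inner_self_eq_norm_sq]
  simp only [inner_sub_left, inner_sub_right, real_inner_comm] at hu hv ⊢
  linarith

theorem norm_sub_le (hP : IsNearestPointMap K P) (hK : Convex ℝ K) (u v : E) :
    ‖P u - P v‖ ≤ ‖u - v‖ := by
  rcases (norm_nonneg (P u - P v)).eq_or_lt with h0 | hpos
  · exact h0 ▸ norm_nonneg _
  · refine le_of_mul_le_mul_right ?_ hpos
    calc ‖P u - P v‖ * ‖P u - P v‖ = ‖P u - P v‖ ^ 2 := (sq _).symm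
      _ ≤ ⟪u - v, P u - P v⟫_ℝ := hP.norm_sub_sq_le_inner hK u v
      _ ≤ ‖u - v‖ * ‖P u - P v‖ := real_inner_le_norm _ _

end IsNearestPointMap

theorem inner_subgradient_sub_nonneg {f : E → ℝ} {x y g h : E}
    (hx : f x + ⟪h, y - x⟫_ℝ ≤ f y) (hy : f y + ⟪g, x - y⟫_ℝ ≤ f x) :
    0 ≤ ⟪h - g, x - y⟫_ℝ := by
  rw [← neg_sub x y, inner_neg_right] at hx
  rw [inner_sub_left]
  linarith

theorem norm_gradient_step_sub_sq_le {x y g g' h : E} {η a L : ℝ} (hη : 0 ≤ η)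
    (hmono : 0 ≤ ⟪h - g', x - y⟫_ℝ) (hgh : ‖g - h‖ ≤ a) (hg : ‖g‖ ≤ L) (hg' : ‖g'‖ ≤ L) :
    ‖(x - η • g) - (y - η • g')‖ ^ 2 ≤
      ‖x - y‖ ^ 2 + 2 * (η * a) * ‖x - y‖ + 4 * L ^ 2 * η ^ 2 := by
  have hinner : -(a * ‖x - y‖) ≤ ⟪g - g', x - y⟫_ℝ := by
    have hsplit : g - g' = (g - h) + (h - g') := by abel
    have hcs := (abs_le.1 (abs_real_inner_le_norm (g - h) (x - y))).1
    rw [hsplit, inner_add_left]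
    linarith [mul_le_mul_of_nonneg_right hgh (norm_nonneg (x - y))]
  have hgg' : ‖g - g'‖ ≤ 2 * L := (norm_sub_le g g').trans (by linarith)
  have hexpand : (x - η • g) - (y - η • g') = (x - y) - η • (g - g') := by
    rw [smul_sub]; abel
  rw [hexpand, norm_sub_sq_real, real_inner_smul_right, real_inner_comm, norm_smul,
    Real.norm_of_nonneg hη, mul_pow]
  have hgg'2 : ‖g - g'‖ ^ 2 ≤ (2 * L) ^ 2 := pow_le_pow_left₀ (norm_nonneg _) hgg' 2
  linarith [mul_le_mul_of_nonneg_left hinner hη, mul_le_mul_of_nonneg_left hgg'2 (sq_nonneg η)]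

theorem IsNearestPointMap.norm_projected_step_sub_sq_le {K : Set E} {P : E → E}
    (hP : IsNearestPointMap K P) (hK : Convex ℝ K) {f : E → ℝ} {x y g g' h : E} {η a L : ℝ}
    (hxK : x ∈ K) (hyK : y ∈ K) (hη : 0 ≤ η)
    (hh : ∀ w ∈ K, f x + ⟪h, w - x⟫_ℝ ≤ f w) (hg' : ∀ w ∈ K, f y + ⟪g', w - y⟫_ℝ ≤ f w)
    (hgh : ‖g - h‖ ≤ a) (hgL : ‖g‖ ≤ L) (hg'L : ‖g'‖ ≤ L) :
    ‖P (x - η • g) - P (y - η • g')‖ ^ 2 ≤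
      ‖x - y‖ ^ 2 + 2 * (η * a) * ‖x - y‖ + 4 * L ^ 2 * η ^ 2 :=
  calc _ ≤ ‖(x - η • g) - (y - η • g')‖ ^ 2 := by gcongr; exact hP.norm_sub_le hK _ _
    _ ≤ _ := norm_gradient_step_sub_sq_le hη
        (inner_subgradient_sub_nonneg (hh y hyK) (hg' x hxK)) hgh hgL hg'L

end InnerProductSpace

theorem le_sqrt_add_of_sq_le {δ δ' c η L A C : ℝ} (hL : 0 ≤ L) (hA : 0 ≤ A) (hC : 0 ≤ C)
    (hc : 0 ≤ c) (hδ : 0 ≤ δ) (hδB : δ ≤ 2 * L * √A + 2 * C)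
    (h : δ' ^ 2 ≤ δ ^ 2 + 2 * c * δ + 4 * L ^ 2 * η ^ 2) :
    δ' ≤ 2 * L * √(A + η ^ 2) + 2 * (C + c) := by
  have hR0R : 2 * L * √A ≤ 2 * L * √(A + η ^ 2) := by
    gcongr
    exact le_add_of_nonneg_right (sq_nonneg η)
  set B := 2 * L * √A + 2 * C
  set R := 2 * L * √(A + η ^ 2)
  have hR2 : R ^ 2 = (2 * L * √A) ^ 2 + 4 * L ^ 2 * η ^ 2 := by
    simp only [R, mul_pow, Real.sq_sqrt hA, Real.sq_sqrt (add_nonneg hA (sq_nonneg η))]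
    ring
  have hBR : B ≤ R + 2 * C := by linarith
  have hB2 : B ^ 2 + 4 * L ^ 2 * η ^ 2 ≤ (R + 2 * C) ^ 2 := by nlinarith
  refine le_of_sq_le_sq ?_ (by positivity)
  calc δ' ^ 2 ≤ δ ^ 2 + 2 * c * δ + 4 * L ^ 2 * η ^ 2 := h
    _ ≤ B ^ 2 + 2 * c * B + 4 * L ^ 2 * η ^ 2 := by gcongr
    _ ≤ (R + 2 * C) ^ 2 + 2 * c * (R + 2 * C) := by
      linarith [mul_le_mul_of_nonneg_left hBR (by positivity : (0 : ℝ) ≤ 2 * c)]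
    _ ≤ (R + 2 * (C + c)) ^ 2 := by nlinarith

theorem le_of_sq_recurrence {δ c η : ℕ → ℝ} {L : ℝ} {s : ℕ} (hL : 0 ≤ L)
    (hδ : ∀ n, 0 ≤ δ n) (hc : ∀ n, 0 ≤ c n) (hs : δ s = 0)
    (hrec : ∀ n, s ≤ n → δ (n + 1) ^ 2 ≤ δ n ^ 2 + 2 * c n * δ n + 4 * L ^ 2 * η n ^ 2) :
    ∀ n, s ≤ n → δ n ≤ 2 * L * √(∑ t ∈ Ico s n, η t ^ 2) + 2 * ∑ t ∈ Ico (s + 1) n, c t := by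
  intro n hn
  induction n, hn using Nat.le_induction with
  | base => simp [hs]
  | succ m hm ih =>
    rw [sum_Ico_succ_top hm]
    have hA : 0 ≤ ∑ t ∈ Ico s m, η t ^ 2 := sum_nonneg fun _ _ => sq_nonneg _
    rcases hm.eq_or_lt with rfl | hlt
    · -- `δ s = 0` kills the term `c s`, which is why the linear sum starts at `s + 1`.
      have h := hrec s le_rfl
      rw [hs] at h
      simpa using le_sqrt_add_of_sq_le (C := 0) (c := 0) hL hA le_rfl le_rfl le_rfl
        (by simp) (by simpa using h)
    · rw [sum_Ico_succ_top hlt]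
      exact le_sqrt_add_of_sq_le hL hA (sum_nonneg fun t _ => hc t) (hc m) (hδ m) ih (hrec m hm)

theorem eqOn_Icc_of_step_eq {α : Type*} {x y : ℕ → α} {F G : ℕ → α → α} {t0 : ℕ}
    (hx : ∀ t, x (t + 1) = F t (x t)) (hy : ∀ t, y (t + 1) = G t (y t)) (h1 : x 1 = y 1)
    (hFG : ∀ t < t0, F t = G t) : Set.EqOn x y (Set.Icc 1 (max t0 1)) := by
  rintro n ⟨hn1, hn⟩
  induction n, hn1 using Nat.le_induction with
  | base => exact h1
  | succ n hn1 ih =>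
    rw [hx, hy, ih (by omega), hFG n (by omega)]

theorem stmt2_general {d : ℕ} (X : Set (EuclideanSpace ℝ (Fin d)))
    (hXconvex : Convex ℝ X)
    (P : EuclideanSpace ℝ (Fin d) → EuclideanSpace ℝ (Fin d))
    (hPmem : ∀ u, P u ∈ X)
    (hPproj : ∀ u, ∀ w ∈ X, ‖P u - u‖ ≤ ‖w - u‖)
    (L : ℝ) (hL : 0 ≤ L)
    (T t0 : ℕ) (hT : 1 ≤ T)
    (f' : ℕ → EuclideanSpace ℝ (Fin d) → ℝ)
    (η a : ℕ → ℝ) (hη : ∀ t, 0 ≤ η t) (ha : ∀ t, 0 ≤ a t ∧ a t ≤ 2 * L)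
    (x y g g' h : ℕ → EuclideanSpace ℝ (Fin d))
    (hx1 : x 1 = y 1)
    (hxstep : ∀ t, x (t + 1) = P (x t - η t • g t))
    (hystep : ∀ t, y (t + 1) = P (y t - η t • g' t))
    (hg' : ∀ t, ∀ w ∈ X, f' t (y t) + (inner ℝ (g' t) (w - y t) : ℝ) ≤ f' t w)
    (hh : ∀ t, ∀ w ∈ X, f' t (x t) + (inner ℝ (h t) (w - x t) : ℝ) ≤ f' t w)
    (hgL : ∀ t, ‖g t‖ ≤ L) (hg'L : ∀ t, ‖g' t‖ ≤ L)
    (hgh : ∀ t, ‖g t - h t‖ ≤ a t)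
    (ht0g : ∀ t < t0, g t = g' t) :
    ‖x T - y T‖ ≤ 2 * L * Real.sqrt (∑ t ∈ Finset.Icc t0 (T - 1), η t ^ 2)
      + 2 * ∑ t ∈ Finset.Icc (t0 + 1) (T - 1), η t * a t := by
  have hP : IsNearestPointMap X P := fun u => ⟨hPmem u, hPproj u⟩
  have hxX (t : ℕ) (ht : 1 ≤ t) : x t ∈ X := Nat.succ_pred_eq_of_pos ht ▸ hxstep _ ▸ hPmem _
  have hyX (t : ℕ) (ht : 1 ≤ t) : y t ∈ X := Nat.succ_pred_eq_of_pos ht ▸ hystep _ ▸ hPmem _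
  -- `x 0` and `y 0` are unconstrained, hence `max t0 1` rather than `t0`
  set s := max t0 1
  have hs0 : t0 ≤ s := le_max_left t0 1
  have hs1 : 1 ≤ s := le_max_right t0 1
  have hagree : Set.EqOn x y (Set.Icc 1 s) :=
    eqOn_Icc_of_step_eq (F := fun t u => P (u - η t • g t)) (G := fun t u => P (u - η t • g' t))
      hxstep hystep hx1 fun t ht => by rw [ht0g t ht]
  have hηa : ∀ t, 0 ≤ η t * a t := fun t => mul_nonneg (hη t) (ha t).1
  have hrec (n : ℕ) (hn : s ≤ n) : ‖x (n + 1) - y (n + 1)‖ ^ 2 ≤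
      ‖x n - y n‖ ^ 2 + 2 * (η n * a n) * ‖x n - y n‖ + 4 * L ^ 2 * η n ^ 2 := by
    rw [hxstep, hystep]
    exact hP.norm_projected_step_sub_sq_le hXconvex (hxX n (hs1.trans hn))
      (hyX n (hs1.trans hn)) (hη n) (hh n) (hg' n) (hgh n) (hgL n) (hg'L n)
  rcases lt_or_ge T s with hTs | hsT
  · rw [hagree ⟨hT, hTs.le⟩, sub_self, norm_zero]
    exact add_nonneg (by positivity) (mul_nonneg zero_le_two (sum_nonneg fun t _ => hηa t))
  calc ‖x T - y T‖
      ≤ 2 * L * √(∑ t ∈ Ico s T, η t ^ 2) + 2 * ∑ t ∈ Ico (s + 1) T, η t * a t :=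
        le_of_sq_recurrence (δ := fun n => ‖x n - y n‖) hL (fun _ => norm_nonneg _) hηa
          (by simp only [hagree ⟨hs1, le_rfl⟩, sub_self, norm_zero]) hrec T hsT
    _ ≤ _ := by
        gcongr 2 * L * √?_ + 2 * ?_
        · exact sum_le_sum_of_subset_of_nonneg (by intro t; simp only [mem_Ico, mem_Icc]; omega)
            fun _ _ _ => sq_nonneg _
        · exact sum_le_sum_of_subset_of_nonneg (by intro t; simp only [mem_Ico, mem_Icc]; omega)
            fun t _ _ => hηa t

/-- The basic lemma: divergence of two projected (sub)gradient descent trajectories on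
convex Lipschitz objectives. -/
theorem stmt2 {d : ℕ} (X : Set (EuclideanSpace ℝ (Fin d)))
    (hXclosed : IsClosed X) (hXconvex : Convex ℝ X)
    (P : EuclideanSpace ℝ (Fin d) → EuclideanSpace ℝ (Fin d))
    (hPmem : ∀ u, P u ∈ X)
    (hPproj : ∀ u, ∀ w ∈ X, ‖P u - u‖ ≤ ‖w - u‖)
    (L : ℝ) (hL : 0 ≤ L)
    (T t0 : ℕ) (hT : 1 ≤ T)
    (f f' : ℕ → EuclideanSpace ℝ (Fin d) → ℝ)
    (hconv : ∀ t, ConvexOn ℝ X (f t)) (hconv' : ∀ t, ConvexOn ℝ X (f' t))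
    (hLip : ∀ t, ∀ u ∈ X, ∀ v ∈ X, |f t u - f t v| ≤ L * ‖u - v‖)
    (hLip' : ∀ t, ∀ u ∈ X, ∀ v ∈ X, |f' t u - f' t v| ≤ L * ‖u - v‖)
    (η a : ℕ → ℝ) (hη : ∀ t, 0 ≤ η t) (ha : ∀ t, 0 ≤ a t ∧ a t ≤ 2 * L)
    (x y g g' h : ℕ → EuclideanSpace ℝ (Fin d))
    (hx1 : x 1 = y 1) (hx1X : x 1 ∈ X)
    (hxstep : ∀ t, x (t + 1) = P (x t - η t • g t))
    (hystep : ∀ t, y (t + 1) = P (y t - η t • g' t))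
    (hg : ∀ t, ∀ w ∈ X, f t (x t) + (inner ℝ (g t) (w - x t) : ℝ) ≤ f t w)
    (hg' : ∀ t, ∀ w ∈ X, f' t (y t) + (inner ℝ (g' t) (w - y t) : ℝ) ≤ f' t w)
    (hh : ∀ t, ∀ w ∈ X, f' t (x t) + (inner ℝ (h t) (w - x t) : ℝ) ≤ f' t w)
    (hgL : ∀ t, ‖g t‖ ≤ L) (hg'L : ∀ t, ‖g' t‖ ≤ L)
    (hgh : ∀ t, ‖g t - h t‖ ≤ a t)
    (ht0f : ∀ t < t0, f t = f' t)
    (ht0g : ∀ t < t0, g t = g' t) :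
    ‖x T - y T‖ ≤ 2 * L * Real.sqrt (∑ t ∈ Finset.Icc t0 (T - 1), η t ^ 2)
      + 2 * ∑ t ∈ Finset.Icc (t0 + 1) (T - 1), η t * a t :=
  stmt2_general X hXconvex P hPmem hPproj L hL T t0 hT f' η a hη ha x y g g' h hx1 hxstep hystep hg'
    hh hgL hg'L hgh ht0g
end

section
/- Let x, y be points in a closed convex set X ⊆ ℝ^d, let f be a convex function on X with subgradients g ∈ ∂f(x), h ∈ ∂f(y), both of norm at most L, and let η ≥ 0. Then ‖Proj_X(x − ηg) − Proj_X(y − ηh)‖² ≤ ‖x − y‖² + 4L²η². -/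
/-!
Metric projection onto a convex set is firmly nonexpansive, hence nonexpansive, so it suffices
to bound `‖(x - y) - η • (g - h)‖²`. Expanding, the cross term `-2η⟪g - h, x - y⟫` is nonpositive
by monotonicity of subgradients, and the remaining term is `η²‖g - h‖² ≤ 4L²η²`.
-/

open scoped InnerProductSpace

section MetricProjection

variable {F : Type*} [NormedAddCommGroup F] [InnerProductSpace ℝ F] {K : Set F}

theorem real_inner_sub_nonpos_of_forall_norm_sub_le (hK : Convex ℝ K) {u p : F} (hp : p ∈ K)
    (hmin : ∀ w ∈ K, ‖p - u‖ ≤ ‖w - u‖) : ∀ w ∈ K, ⟪u - p, w - p⟫_ℝ ≤ 0 := by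
  have : Nonempty K := ⟨⟨p, hp⟩⟩
  refine (norm_eq_iInf_iff_real_inner_le_zero hK hp).1 (le_antisymm ?_ ?_)
  · exact le_ciInf fun w => by simpa only [norm_sub_rev] using hmin w w.2
  · exact ciInf_le ⟨0, by rintro _ ⟨w, rfl⟩; exact norm_nonneg _⟩ (⟨p, hp⟩ : K)

variable (hK : Convex ℝ K) {P : F → F} (hPmem : ∀ u, P u ∈ K)
  (hPproj : ∀ u, ∀ w ∈ K, ‖P u - u‖ ≤ ‖w - u‖)
include hK hPmem hPproj

theorem sq_norm_sub_le_real_inner_of_forall_norm_sub_le (u v : F) :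
    ‖P u - P v‖ ^ 2 ≤ ⟪u - v, P u - P v⟫_ℝ := by
  have hu := real_inner_sub_nonpos_of_forall_norm_sub_le hK (hPmem u) (hPproj u) _ (hPmem v)
  have hv := real_inner_sub_nonpos_of_forall_norm_sub_le hK (hPmem v) (hPproj v) _ (hPmem u)
  rw [← real_inner_self_eq_norm_sq]
  simp only [inner_sub_left, inner_sub_right, real_inner_comm] at hu hv ⊢
  linarith

theorem norm_sub_le_of_forall_norm_sub_le (u v : F) : ‖P u - P v‖ ≤ ‖u - v‖ := by
  have hfirm := sq_norm_sub_le_real_inner_of_forall_norm_sub_le hK hPmem hPproj u v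
  have hcs := real_inner_le_norm (u - v) (P u - P v)
  nlinarith [norm_nonneg (P u - P v), norm_nonneg (u - v)]

end MetricProjection

section Subgradient

variable {F : Type*} [NormedAddCommGroup F] [InnerProductSpace ℝ F]

def IsSubgradient (f : F → ℝ) (s : Set F) (x g : F) : Prop :=
  ∀ w ∈ s, f x + ⟪g, w - x⟫_ℝ ≤ f w

theorem IsSubgradient.real_inner_sub_sub_nonneg {f : F → ℝ} {s : Set F} {x y g h : F}
    (hg : IsSubgradient f s x g) (hh : IsSubgradient f s y h) (hx : x ∈ s) (hy : y ∈ s) :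
    0 ≤ ⟪g - h, x - y⟫_ℝ := by
  have hgy := hg y hy
  have hhx := hh x hx
  rw [← neg_sub x y, inner_neg_right] at hgy
  rw [inner_sub_left]
  linarith

end Subgradient

theorem norm_sub_smul_sq_le_of_real_inner_nonneg {F : Type*} [NormedAddCommGroup F]
    [InnerProductSpace ℝ F] {a b : F} {η : ℝ} (hη : 0 ≤ η) (hab : 0 ≤ ⟪a, b⟫_ℝ) :
    ‖a - η • b‖ ^ 2 ≤ ‖a‖ ^ 2 + η ^ 2 * ‖b‖ ^ 2 := by
  rw [norm_sub_sq_real, real_inner_smul_right, norm_smul, Real.norm_eq_abs, abs_of_nonneg hη]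
  nlinarith [mul_nonneg hη hab]

theorem stmt4_general {d : ℕ} (X : Set (EuclideanSpace ℝ (Fin d)))
    (hXconvex : Convex ℝ X)
    (P : EuclideanSpace ℝ (Fin d) → EuclideanSpace ℝ (Fin d))
    (hPmem : ∀ u, P u ∈ X)
    (hPproj : ∀ u, ∀ w ∈ X, ‖P u - u‖ ≤ ‖w - u‖)
    (L η : ℝ) (hη : 0 ≤ η)
    (f : EuclideanSpace ℝ (Fin d) → ℝ)
    (x y : EuclideanSpace ℝ (Fin d)) (hx : x ∈ X) (hy : y ∈ X)
    (g h : EuclideanSpace ℝ (Fin d))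
    (hg : ∀ w ∈ X, f x + (inner ℝ g (w - x) : ℝ) ≤ f w)
    (hh : ∀ w ∈ X, f y + (inner ℝ h (w - y) : ℝ) ≤ f w)
    (hgL : ‖g‖ ≤ L) (hhL : ‖h‖ ≤ L) :
    ‖P (x - η • g) - P (y - η • h)‖ ^ 2 ≤ ‖x - y‖ ^ 2 + 4 * L ^ 2 * η ^ 2 := by
  have hmono : 0 ≤ ⟪x - y, g - h⟫_ℝ :=
    real_inner_comm (x - y) (g - h) ▸ IsSubgradient.real_inner_sub_sub_nonneg hg hh hx hy
  have hgh : ‖g - h‖ ≤ 2 * L := (norm_sub_le g h).trans (by linarith)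
  calc ‖P (x - η • g) - P (y - η • h)‖ ^ 2 ≤ ‖(x - η • g) - (y - η • h)‖ ^ 2 :=
        pow_le_pow_left₀ (norm_nonneg _)
          (norm_sub_le_of_forall_norm_sub_le hXconvex hPmem hPproj _ _) 2
    _ = ‖(x - y) - η • (g - h)‖ ^ 2 := by rw [smul_sub]; abel_nf
    _ ≤ ‖x - y‖ ^ 2 + η ^ 2 * ‖g - h‖ ^ 2 := norm_sub_smul_sq_le_of_real_inner_nonneg hη hmono
    _ ≤ ‖x - y‖ ^ 2 + η ^ 2 * (2 * L) ^ 2 := by gcongr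
    _ = ‖x - y‖ ^ 2 + 4 * L ^ 2 * η ^ 2 := by ring

/-- One projected subgradient step on the same convex function from two points:
squared distance grows by at most `4L²η²`. -/
theorem stmt4 {d : ℕ} (X : Set (EuclideanSpace ℝ (Fin d)))
    (hXclosed : IsClosed X) (hXconvex : Convex ℝ X)
    (P : EuclideanSpace ℝ (Fin d) → EuclideanSpace ℝ (Fin d))
    (hPmem : ∀ u, P u ∈ X)
    (hPproj : ∀ u, ∀ w ∈ X, ‖P u - u‖ ≤ ‖w - u‖)
    (L η : ℝ) (hL : 0 ≤ L) (hη : 0 ≤ η)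
    (f : EuclideanSpace ℝ (Fin d) → ℝ) (hconv : ConvexOn ℝ X f)
    (x y : EuclideanSpace ℝ (Fin d)) (hx : x ∈ X) (hy : y ∈ X)
    (g h : EuclideanSpace ℝ (Fin d))
    (hg : ∀ w ∈ X, f x + (inner ℝ g (w - x) : ℝ) ≤ f w)
    (hh : ∀ w ∈ X, f y + (inner ℝ h (w - y) : ℝ) ≤ f w)
    (hgL : ‖g‖ ≤ L) (hhL : ‖h‖ ≤ L) :
    ‖P (x - η • g) - P (y - η • h)‖ ^ 2 ≤ ‖x - y‖ ^ 2 + 4 * L ^ 2 * η ^ 2 :=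
  stmt4_general X hXconvex P hPmem hPproj L η hη f x y hx hy g h hg hh hgL hhL
end

section
/- Full-batch projected subgradient descent on two datasets differing in one of n points, run for T iterations with step sizes (η_t) on convex L-Lipschitz losses over a convex set X ⊆ B(0,R), produces iterates x^T, y^T (from the same initialization) with ‖x^T − y^T‖ ≤ min{2R, 4L(√(Σ_{t=1}^{T-1} η_t²) + (1/n) Σ_{t=1}^{T-1} η_t)}. -/
/-!
Write `δ_t = ‖x_t - y_t‖`. The projection onto the convex set `X` is nonexpansive, so it
suffices to compare the unprojected steps. For the `n - 1` shared losses the subgradient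
inequalities at `x_t` and `y_t` give `⟪g_j - g'_j, x_t - y_t⟫ ≥ 0`, so only the differing loss
can push the iterates apart, contributing a drift of at most `2Lη_t/n`; the step itself has
length at most `2Lη_t`. Hence `δ_{t+1}² ≤ (δ_t + 2Lη_t/n)² + (2Lη_t)²`, and this recurrence
unrolls to `δ_T ≤ (2L/n) ∑ η_t + 2L √(∑ η_t²)`. The bound `2R` is the diameter of `X`.
-/

open Finset

section InnerProductSpace

variable {E : Type*} [NormedAddCommGroup E] [InnerProductSpace ℝ E]

section NearestPoint

variable {X : Set E} {P : E → E}

theorem inner_sub_nearest_nonpos (hX : Convex ℝ X) (hPmem : ∀ u, P u ∈ X)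
    (hPproj : ∀ u, ∀ w ∈ X, ‖P u - u‖ ≤ ‖w - u‖) (u : E) {w : E} (hw : w ∈ X) :
    inner ℝ (u - P u) (w - P u) ≤ 0 := by
  have : Nonempty X := ⟨⟨P u, hPmem u⟩⟩
  refine (norm_eq_iInf_iff_real_inner_le_zero hX (hPmem u)).mp (le_antisymm ?_ ?_) w hw
  · exact le_ciInf fun v : X => by simpa only [norm_sub_rev u] using hPproj u v v.2
  · exact ciInf_le (f := fun v : X => ‖u - v‖) ⟨0, by rintro _ ⟨v, rfl⟩; positivity⟩
      ⟨P u, hPmem u⟩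

theorem norm_nearest_sub_nearest_le (hX : Convex ℝ X) (hPmem : ∀ u, P u ∈ X)
    (hPproj : ∀ u, ∀ w ∈ X, ‖P u - u‖ ≤ ‖w - u‖) (u v : E) :
    ‖P u - P v‖ ≤ ‖u - v‖ := by
  have hu := inner_sub_nearest_nonpos hX hPmem hPproj u (hPmem v)
  have hv := inner_sub_nearest_nonpos hX hPmem hPproj v (hPmem u)
  -- adding the two variational inequalities gives `‖P u - P v‖² ≤ ⟪u - v, P u - P v⟫`
  have hsq : ‖P u - P v‖ ^ 2 ≤ ‖u - v‖ * ‖P u - P v‖ := by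
    have hsum : inner ℝ (u - v) (P u - P v) - ‖P u - P v‖ ^ 2
        = -inner ℝ (u - P u) (P v - P u) - inner ℝ (v - P v) (P u - P v) := by
      rw [← real_inner_self_eq_norm_sq, ← inner_sub_left, ← inner_neg_right, neg_sub,
        ← inner_sub_left]
      congr 1
      abel
    linarith [real_inner_le_norm (u - v) (P u - P v)]
  rcases (norm_nonneg (P u - P v)).eq_or_lt with h0 | h0
  · rw [← h0]
    positivity
  · exact le_of_mul_le_mul_right (by linarith) h0

end NearestPoint

theorem inner_sub_nonneg_of_subgradient {f : E → ℝ} {a b u v : E}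
    (ha : f a + inner ℝ u (b - a) ≤ f b) (hb : f b + inner ℝ v (a - b) ≤ f a) :
    0 ≤ inner ℝ (u - v) (a - b) := by
  rw [← neg_sub b a, inner_neg_right] at hb
  rw [inner_sub_left, ← neg_sub b a, inner_neg_right, inner_neg_right]
  linarith

theorem neg_norm_mul_norm_le_sum_inner {ι : Type*} [Fintype ι] {v : ι → E} {z : E} (i : ι)
    (h : ∀ j, j ≠ i → 0 ≤ inner ℝ (v j) z) :
    -(‖v i‖ * ‖z‖) ≤ ∑ j, inner ℝ (v j) z := by
  classical
  rw [← add_sum_erase _ _ (mem_univ i)]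
  have hrest : 0 ≤ ∑ j ∈ univ.erase i, inner ℝ (v j) z :=
    sum_nonneg fun j hj => h j (ne_of_mem_erase hj)
  linarith [neg_le_of_abs_le (abs_real_inner_le_norm (v i) z)]

theorem norm_sub_smul_sq_le {z w : E} {η a G : ℝ} (hη : 0 ≤ η) (hw : ‖w‖ ≤ G)
    (hzw : -(a * ‖z‖) ≤ inner ℝ z w) :
    ‖z - η • w‖ ^ 2 ≤ (‖z‖ + a * η) ^ 2 + (G * η) ^ 2 := by
  have hw2 : ‖w‖ ^ 2 ≤ G ^ 2 := pow_le_pow_left₀ (norm_nonneg w) hw 2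
  rw [norm_sub_sq_real, real_inner_smul_right, norm_smul, Real.norm_of_nonneg hη]
  nlinarith [mul_le_mul_of_nonneg_left hzw hη, mul_le_mul_of_nonneg_left hw2 (sq_nonneg η),
    sq_nonneg (η * a)]

theorem norm_inv_card_smul_sum_le {ι : Type*} [Fintype ι] [Nonempty ι] {v : ι → E} {G : ℝ}
    (hv : ∀ j, ‖v j‖ ≤ G) :
    ‖(Fintype.card ι : ℝ)⁻¹ • ∑ j, v j‖ ≤ G := by
  have hcard : (0 : ℝ) < Fintype.card ι := by exact_mod_cast Fintype.card_pos
  rw [norm_smul, norm_inv, RCLike.norm_natCast, inv_mul_le_iff₀ hcard]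
  calc ‖∑ j, v j‖ ≤ ∑ j, ‖v j‖ := norm_sum_le _ _
    _ ≤ ∑ _j : ι, G := sum_le_sum fun j _ => hv j
    _ = Fintype.card ι * G := by rw [sum_const, card_univ, nsmul_eq_mul]

theorem norm_sub_gradient_step_sq_le {ι : Type*} [Fintype ι] {f f' : ι → E → ℝ} {i : ι}
    (hdiff : ∀ j, j ≠ i → f j = f' j) {a b : E} {g g' : ι → E}
    (hg : ∀ j, f j a + inner ℝ (g j) (b - a) ≤ f j b)
    (hg' : ∀ j, f' j b + inner ℝ (g' j) (a - b) ≤ f' j a)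
    {L : ℝ} (hgL : ∀ j, ‖g j‖ ≤ L) (hg'L : ∀ j, ‖g' j‖ ≤ L) {η : ℝ} (hη : 0 ≤ η) :
    ‖(a - η • ((Fintype.card ι : ℝ)⁻¹ • ∑ j, g j))
        - (b - η • ((Fintype.card ι : ℝ)⁻¹ • ∑ j, g' j))‖ ^ 2
      ≤ (‖a - b‖ + 2 * L / Fintype.card ι * η) ^ 2 + (2 * L * η) ^ 2 := by
  have : Nonempty ι := ⟨i⟩
  have hgg' : ∀ j, ‖g j - g' j‖ ≤ 2 * L := fun j =>
    (norm_sub_le _ _).trans (by linarith [hgL j, hg'L j])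
  have hmono : ∀ j, j ≠ i → 0 ≤ inner ℝ (g j - g' j) (a - b) := fun j hj =>
    inner_sub_nonneg_of_subgradient (hg j) (hdiff j hj ▸ hg' j)
  have hinner : -(2 * L / Fintype.card ι * ‖a - b‖)
      ≤ inner ℝ (a - b) ((Fintype.card ι : ℝ)⁻¹ • ∑ j, (g j - g' j)) := by
    rw [real_inner_comm, real_inner_smul_left, sum_inner, div_eq_inv_mul, mul_assoc,
      ← mul_neg]
    gcongr
    exact (neg_le_neg (mul_le_mul_of_nonneg_right (hgg' i) (norm_nonneg _))).trans
      (neg_norm_mul_norm_le_sum_inner i hmono)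
  have hrearrange : (a - η • ((Fintype.card ι : ℝ)⁻¹ • ∑ j, g j))
      - (b - η • ((Fintype.card ι : ℝ)⁻¹ • ∑ j, g' j))
      = (a - b) - η • ((Fintype.card ι : ℝ)⁻¹ • ∑ j, (g j - g' j)) := by
    rw [sum_sub_distrib, smul_sub, smul_sub]
    abel
  rw [hrearrange]
  exact norm_sub_smul_sq_le hη (norm_inv_card_smul_sum_le hgg') hinner

end InnerProductSpace

theorem le_add_sqrt_add_of_sq_le {δ C q e : ℝ} (hC : 0 ≤ C) (hq : 0 ≤ q) (he : 0 ≤ e)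
    (h : δ ^ 2 ≤ (C + √q) ^ 2 + e) :
    δ ≤ C + √(q + e) := by
  have hmono : √q ≤ √(q + e) := Real.sqrt_le_sqrt (by linarith)
  refine le_of_pow_le_pow_left₀ two_ne_zero (by positivity) (h.trans ?_)
  nlinarith [Real.sq_sqrt hq, Real.sq_sqrt (add_nonneg hq he), Real.sqrt_nonneg q]

theorem le_add_sum_add_sqrt_sum_of_sq_le {δ α β : ℕ → ℝ} {m : ℕ} (hδ : ∀ t, 0 ≤ δ t)
    (hα : ∀ t, 0 ≤ α t) (hβ : ∀ t, 0 ≤ β t)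
    (hrec : ∀ t, m ≤ t → δ (t + 1) ^ 2 ≤ (δ t + α t) ^ 2 + β t) {t : ℕ} (ht : m ≤ t) :
    δ t ≤ δ m + ∑ s ∈ Ico m t, α s + √(∑ s ∈ Ico m t, β s) := by
  induction t, ht using Nat.le_induction with
  | base => simp
  | succ t ht ih =>
    rw [sum_Ico_succ_top ht, sum_Ico_succ_top ht, ← add_assoc]
    have hsum : 0 ≤ ∑ s ∈ Ico m t, α s := sum_nonneg fun s _ => hα s
    refine le_add_sqrt_add_of_sq_le (by linarith [hδ m, hα t]) (sum_nonneg fun s _ => hβ s)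
      (hβ t) ((hrec t ht).trans ?_)
    gcongr ?_ ^ 2 + _
    · linarith [hδ t, hα t]
    · linarith

theorem le_add_mul_sum_add_mul_sqrt_sum_sq_of_sq_le {δ η : ℕ → ℝ} {a G : ℝ} {m : ℕ}
    (hδ : ∀ t, 0 ≤ δ t) (hη : ∀ t, 0 ≤ η t) (ha : 0 ≤ a) (hG : 0 ≤ G)
    (hrec : ∀ t, m ≤ t → δ (t + 1) ^ 2 ≤ (δ t + a * η t) ^ 2 + (G * η t) ^ 2) {t : ℕ}
    (ht : m ≤ t) :
    δ t ≤ δ m + a * ∑ s ∈ Ico m t, η s + G * √(∑ s ∈ Ico m t, η s ^ 2) := by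
  have h := le_add_sum_add_sqrt_sum_of_sq_le hδ (fun s => mul_nonneg ha (hη s))
    (fun s => sq_nonneg (G * η s)) hrec ht
  simp_rw [mul_pow] at h
  rwa [← mul_sum, ← mul_sum, Real.sqrt_mul' _ (sum_nonneg fun s _ => sq_nonneg (η s)),
    Real.sqrt_sq hG] at h

theorem stmt5_general {d n : ℕ}
    (X : Set (EuclideanSpace ℝ (Fin d)))
    (hXconvex : Convex ℝ X)
    (R L : ℝ) (hL : 0 ≤ L)
    (hXR : X ⊆ Metric.closedBall 0 R)
    (P : EuclideanSpace ℝ (Fin d) → EuclideanSpace ℝ (Fin d))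
    (hPmem : ∀ u, P u ∈ X)
    (hPproj : ∀ u, ∀ w ∈ X, ‖P u - u‖ ≤ ‖w - u‖)
    (f f' : Fin n → EuclideanSpace ℝ (Fin d) → ℝ) (i : Fin n)
    (hdiff : ∀ j, j ≠ i → f j = f' j)
    (T : ℕ) (hT : 1 ≤ T)
    (η : ℕ → ℝ) (hη : ∀ t, 0 ≤ η t)
    (x y : ℕ → EuclideanSpace ℝ (Fin d))
    (g g' : ℕ → Fin n → EuclideanSpace ℝ (Fin d))
    (hx1 : x 1 = y 1) (hx1X : x 1 ∈ X)
    (hg : ∀ t j, ∀ w ∈ X, f j (x t) + (inner ℝ (g t j) (w - x t) : ℝ) ≤ f j w)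
    (hg' : ∀ t j, ∀ w ∈ X, f' j (y t) + (inner ℝ (g' t j) (w - y t) : ℝ) ≤ f' j w)
    (hgL : ∀ t j, ‖g t j‖ ≤ L) (hg'L : ∀ t j, ‖g' t j‖ ≤ L)
    (hxstep : ∀ t, x (t + 1) = P (x t - η t • (((n : ℝ))⁻¹ • ∑ j, g t j)))
    (hystep : ∀ t, y (t + 1) = P (y t - η t • (((n : ℝ))⁻¹ • ∑ j, g' t j))) :
    ‖x T - y T‖ ≤ min (2 * R)
      (4 * L * (Real.sqrt (∑ t ∈ Finset.Icc 1 (T - 1), η t ^ 2)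
        + (1 / n) * ∑ t ∈ Finset.Icc 1 (T - 1), η t)) := by
  have hmem : ∀ t, 1 ≤ t → x t ∈ X ∧ y t ∈ X := by
    intro t ht
    induction t, ht using Nat.le_induction with
    | base => exact ⟨hx1X, hx1 ▸ hx1X⟩
    | succ t _ _ => exact ⟨hxstep t ▸ hPmem _, hystep t ▸ hPmem _⟩
  have hstep : ∀ t, 1 ≤ t → ‖x (t + 1) - y (t + 1)‖ ^ 2
      ≤ (‖x t - y t‖ + 2 * L / n * η t) ^ 2 + (2 * L * η t) ^ 2 := by
    intro t ht
    rw [hxstep, hystep]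
    refine (pow_le_pow_left₀ (norm_nonneg _)
      (norm_nearest_sub_nearest_le hXconvex hPmem hPproj _ _) 2).trans ?_
    simpa only [Fintype.card_fin] using norm_sub_gradient_step_sq_le hdiff
      (fun j => hg t j _ (hmem t ht).2) (fun j => hg' t j _ (hmem t ht).1)
      (hgL t) (hg'L t) (hη t)
  have hbound := le_add_mul_sum_add_mul_sqrt_sum_sq_of_sq_le (fun t => norm_nonneg (x t - y t))
    hη (by positivity) (by positivity) hstep hT
  rw [hx1, sub_self, norm_zero, zero_add,
    ← Icc_sub_one_right_eq_Ico_of_not_isMin (by simpa using (zero_lt_one.trans_le hT).ne')]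
    at hbound
  obtain ⟨hxT, hyT⟩ := hmem T hT
  refine le_min ?_ (hbound.trans ?_)
  · have hx := mem_closedBall_zero_iff.mp (hXR hxT)
    have hy := mem_closedBall_zero_iff.mp (hXR hyT)
    linarith [norm_sub_le (x T) (y T)]
  · have hS : 0 ≤ ∑ t ∈ Icc 1 (T - 1), η t := sum_nonneg fun t _ => hη t
    rw [div_eq_mul_one_div (2 * L)]
    nlinarith [mul_nonneg hL (Real.sqrt_nonneg (∑ t ∈ Icc 1 (T - 1), η t ^ 2)),
      mul_nonneg (mul_nonneg hL hS) (one_div_nonneg.mpr (Nat.cast_nonneg n))]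

/-- Uniform argument stability of full-batch projected subgradient descent on two datasets
differing in one of `n` points. -/
theorem stmt5 {d n : ℕ} (hn : 0 < n)
    (X : Set (EuclideanSpace ℝ (Fin d)))
    (hXclosed : IsClosed X) (hXconvex : Convex ℝ X)
    (R L : ℝ) (hL : 0 ≤ L)
    (hXR : X ⊆ Metric.closedBall 0 R)
    (P : EuclideanSpace ℝ (Fin d) → EuclideanSpace ℝ (Fin d))
    (hPmem : ∀ u, P u ∈ X)
    (hPproj : ∀ u, ∀ w ∈ X, ‖P u - u‖ ≤ ‖w - u‖)
    (f f' : Fin n → EuclideanSpace ℝ (Fin d) → ℝ) (i : Fin n)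
    (hdiff : ∀ j, j ≠ i → f j = f' j)
    (hconv : ∀ j, ConvexOn ℝ X (f j)) (hconv' : ∀ j, ConvexOn ℝ X (f' j))
    (hLip : ∀ j, ∀ u ∈ X, ∀ v ∈ X, |f j u - f j v| ≤ L * ‖u - v‖)
    (hLip' : ∀ j, ∀ u ∈ X, ∀ v ∈ X, |f' j u - f' j v| ≤ L * ‖u - v‖)
    (T : ℕ) (hT : 1 ≤ T)
    (η : ℕ → ℝ) (hη : ∀ t, 0 ≤ η t)
    (x y : ℕ → EuclideanSpace ℝ (Fin d))
    (g g' : ℕ → Fin n → EuclideanSpace ℝ (Fin d))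
    (hx1 : x 1 = y 1) (hx1X : x 1 ∈ X)
    (hg : ∀ t j, ∀ w ∈ X, f j (x t) + (inner ℝ (g t j) (w - x t) : ℝ) ≤ f j w)
    (hg' : ∀ t j, ∀ w ∈ X, f' j (y t) + (inner ℝ (g' t j) (w - y t) : ℝ) ≤ f' j w)
    (hgL : ∀ t j, ‖g t j‖ ≤ L) (hg'L : ∀ t j, ‖g' t j‖ ≤ L)
    (hxstep : ∀ t, x (t + 1) = P (x t - η t • (((n : ℝ))⁻¹ • ∑ j, g t j)))
    (hystep : ∀ t, y (t + 1) = P (y t - η t • (((n : ℝ))⁻¹ • ∑ j, g' t j))) :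
    ‖x T - y T‖ ≤ min (2 * R)
      (4 * L * (Real.sqrt (∑ t ∈ Finset.Icc 1 (T - 1), η t ^ 2)
        + (1 / n) * ∑ t ∈ Finset.Icc 1 (T - 1), η t)) :=
  stmt5_general X hXconvex R L hL hXR P hPmem hPproj f f' i hdiff T hT η hη x y g g' hx1 hx1X hg hg'
    hgL hg'L hxstep hystep
end

section
/- Fixed-permutation SGD on convex L-Lipschitz losses over a convex set X ⊆ B(0,R), with any fixed permutation and nonincreasing step sizes (η_t), run for T iterations from the same initialization on two datasets differing in one of n points, satisfies ‖x^T − y^T‖ ≤ min{2R, 2L√(Σ_{t=1}^{T-1} η_t²) + (4L/n) Σ_{t=1}^{T-1} η_t}. -/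
open Finset
open scoped RealInnerProductSpace

/-!
Projection onto a convex set is nonexpansive, and subgradients of a convex function form a
monotone field, so a step that uses the same loss on both trajectories only grows the distance in
quadrature: `‖x⁺ - y⁺‖² ≤ ‖x - y‖² + (2Lη)²`. A step using the differing loss obeys just the
triangle bound `‖x⁺ - y⁺‖ ≤ ‖x - y‖ + 2Lη`, except at its first use, where the trajectories still
coincide. Hence `‖x^T - y^T‖ ≤ 2L√(Σ η_t²) + 2L Σ' η_t`, the primed sum running over the later
uses of the differing loss; each of these is preceded by `n` larger step sizes, so
`Σ' η_t ≤ (1/n) Σ η_t`.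
-/

theorem Real.sqrt_add_sq_add_sq_le (a : ℝ) {b : ℝ} (hb : 0 ≤ b) (c : ℝ) :
    √((a + b) ^ 2 + c ^ 2) ≤ √(a ^ 2 + c ^ 2) + b := by
  have hs : a ≤ √(a ^ 2 + c ^ 2) := Real.le_sqrt_of_sq_le (by nlinarith [sq_nonneg c])
  rw [Real.sqrt_le_left (by positivity)]
  nlinarith [mul_le_mul_of_nonneg_left hs hb, Real.sq_sqrt (by positivity : 0 ≤ a ^ 2 + c ^ 2)]

theorem le_sqrt_sum_sq_add_sum_filter {δ c : ℕ → ℝ} (B : ℕ → Prop) [DecidablePred B]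
    (hδ : ∀ t, 0 ≤ δ t) (hc : ∀ t, 0 ≤ c t) (h1 : δ 1 = 0)
    (hgood : ∀ t, 1 ≤ t → ¬ B t → δ (t + 1) ^ 2 ≤ δ t ^ 2 + c t ^ 2)
    (hbad : ∀ t, 1 ≤ t → B t → δ (t + 1) ≤ δ t + c t) (m : ℕ) :
    δ (m + 1) ≤ √(∑ t ∈ Icc 1 m, c t ^ 2) + ∑ t ∈ (Icc 1 m).filter B, c t := by
  rw [sum_filter]
  induction m with
  | zero => simp [h1]
  | succ m ih =>
    rw [sum_Icc_succ_top (by omega), sum_Icc_succ_top (by omega)]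
    set S := ∑ t ∈ Icc 1 m, c t ^ 2
    set F := ∑ t ∈ Icc 1 m, if B t then c t else 0
    have hS : 0 ≤ S := sum_nonneg fun t _ => sq_nonneg (c t)
    have hF : 0 ≤ F := sum_nonneg fun t _ => by split_ifs <;> simp [hc]
    by_cases hB : B (m + 1)
    · rw [if_pos hB]
      calc δ (m + 1 + 1) ≤ δ (m + 1) + c (m + 1) := hbad _ (by omega) hB
        _ ≤ √S + F + c (m + 1) := by gcongr
        _ ≤ √(S + c (m + 1) ^ 2) + (F + c (m + 1)) := by
            have : √S ≤ √(S + c (m + 1) ^ 2) :=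
              Real.sqrt_le_sqrt (le_add_of_nonneg_right (sq_nonneg _))
            linarith
    · rw [if_neg hB, add_zero]
      calc δ (m + 1 + 1) ≤ √(δ (m + 1) ^ 2 + c (m + 1) ^ 2) :=
            Real.le_sqrt_of_sq_le (hgood _ (by omega) hB)
        _ ≤ √((√S + F) ^ 2 + c (m + 1) ^ 2) := by gcongr; exact hδ _
        _ ≤ √(√S ^ 2 + c (m + 1) ^ 2) + F :=
            Real.sqrt_add_sq_add_sq_le _ hF _
        _ = √(S + c (m + 1) ^ 2) + F := by rw [Real.sq_sqrt hS]

theorem add_le_of_mod_eq_of_lt {n a b : ℕ} (hab : a % n = b % n) (hlt : a < b) : a + n ≤ b := by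
  have : n ≤ b - a :=
    Nat.le_of_dvd (by omega) (Nat.dvd_of_mod_eq_zero (Nat.sub_mod_eq_zero_of_mod_eq hab.symm))
  omega

/-- Each step `t > n` in a fixed residue class is dominated by the `n` steps ending at it,
and these windows are disjoint. -/
theorem mul_sum_filter_mod_eq_le_sum {η : ℕ → ℝ} (hη : ∀ t, 0 ≤ η t) (hanti : Antitone η)
    (n r m : ℕ) :
    n * ∑ t ∈ (Icc 1 m).filter (fun t => t % n = r ∧ n < t), η t ≤ ∑ t ∈ Icc 1 m, η t := by
  set F := (Icc 1 m).filter (fun t => t % n = r ∧ n < t)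
  have hdisj : (F : Set ℕ).PairwiseDisjoint fun t => Ioc (t - n) t := by
    intro a ha b hb hab
    simp only [F, coe_filter, Set.mem_ofPred_eq] at ha hb
    have : a + n ≤ b ∨ b + n ≤ a := hab.lt_or_gt.imp
      (add_le_of_mod_eq_of_lt (ha.2.1.trans hb.2.1.symm))
      (add_le_of_mod_eq_of_lt (hb.2.1.trans ha.2.1.symm))
    simp only [Function.onFun, disjoint_left, mem_Ioc]
    omega
  have hsub : F.biUnion (fun t => Ioc (t - n) t) ⊆ Icc 1 m := by
    intro s hs
    simp only [F, mem_biUnion, mem_filter, mem_Icc, mem_Ioc] at hs ⊢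
    omega
  calc n * ∑ t ∈ F, η t = ∑ t ∈ F, ∑ _s ∈ Ioc (t - n) t, η t := by
        rw [mul_sum]
        refine sum_congr rfl fun t ht => ?_
        rw [sum_const, Nat.card_Ioc, nsmul_eq_mul]
        simp only [F, mem_filter] at ht
        congr 2; omega
    _ ≤ ∑ t ∈ F, ∑ s ∈ Ioc (t - n) t, η s :=
        sum_le_sum fun t _ => sum_le_sum fun s hs => hanti (mem_Ioc.1 hs).2
    _ = ∑ s ∈ F.biUnion (fun t => Ioc (t - n) t), η s := (sum_biUnion hdisj).symm
    _ ≤ ∑ t ∈ Icc 1 m, η t := sum_le_sum_of_subset_of_nonneg hsub fun t _ _ => hη t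

theorem eq_of_forall_lt_update_eq {α : Type*} {x y : ℕ → α} {F F' : ℕ → α → α}
    (hx : ∀ t, x (t + 1) = F t (x t)) (hy : ∀ t, y (t + 1) = F' t (y t)) (h1 : x 1 = y 1)
    {t : ℕ} (ht : 1 ≤ t) (hF : ∀ s, 1 ≤ s → s < t → F s = F' s) : x t = y t := by
  induction t, ht using Nat.le_induction with
  | base => exact h1
  | succ t ht ih =>
    rw [hx, hy, ih fun s hs hst => hF s hs (by omega), hF t ht (by omega)]

section InnerProductSpace

variable {E : Type*} [NormedAddCommGroup E] [InnerProductSpace ℝ E] {X : Set E}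

theorem real_inner_sub_le_zero_of_forall_norm_sub_le (hX : Convex ℝ X) {u p : E} (hp : p ∈ X)
    (hmin : ∀ w ∈ X, ‖p - u‖ ≤ ‖w - u‖) : ∀ w ∈ X, ⟪u - p, w - p⟫ ≤ 0 := by
  rw [← norm_eq_iInf_iff_real_inner_le_zero hX hp]
  have : Nonempty X := ⟨⟨p, hp⟩⟩
  refine le_antisymm (le_ciInf fun w => ?_) (ciInf_le ⟨0, ?_⟩ (⟨p, hp⟩ : X))
  · simpa only [norm_sub_rev u] using hmin w w.2
  · rintro _ ⟨w, rfl⟩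
    exact norm_nonneg _

theorem norm_sub_sq_le_inner_of_forall_norm_sub_le (hX : Convex ℝ X) {P : E → E}
    (hPmem : ∀ u, P u ∈ X) (hPproj : ∀ u, ∀ w ∈ X, ‖P u - u‖ ≤ ‖w - u‖) (u v : E) :
    ‖P u - P v‖ ^ 2 ≤ ⟪u - v, P u - P v⟫ := by
  have hu := real_inner_sub_le_zero_of_forall_norm_sub_le hX (hPmem u) (hPproj u) _ (hPmem v)
  have hv := real_inner_sub_le_zero_of_forall_norm_sub_le hX (hPmem v) (hPproj v) _ (hPmem u)
  have hsplit : u - v = (P u - P v) + ((u - P u) - (v - P v)) := by abel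
  rw [← neg_sub (P u) (P v), inner_neg_right] at hu
  rw [hsplit, inner_add_left, real_inner_self_eq_norm_sq, inner_sub_left]
  linarith

theorem norm_sub_le_of_forall_norm_sub_le_s8 (hX : Convex ℝ X) {P : E → E}
    (hPmem : ∀ u, P u ∈ X) (hPproj : ∀ u, ∀ w ∈ X, ‖P u - u‖ ≤ ‖w - u‖) (u v : E) :
    ‖P u - P v‖ ≤ ‖u - v‖ := by
  have h := (norm_sub_sq_le_inner_of_forall_norm_sub_le hX hPmem hPproj u v).trans
    (real_inner_le_norm (u - v) (P u - P v))
  rw [sq] at h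
  rcases (norm_nonneg (P u - P v)).eq_or_lt with h0 | h0
  · exact h0 ▸ norm_nonneg _
  · exact le_of_mul_le_mul_right h h0

theorem inner_sub_nonneg_of_subgradient_s8 {f : E → ℝ} {g : E → E}
    (hg : ∀ u, ∀ w ∈ X, f u + ⟪g u, w - u⟫ ≤ f w) {u v : E} (hu : u ∈ X) (hv : v ∈ X) :
    0 ≤ ⟪g u - g v, u - v⟫ := by
  have huv := hg u v hv
  have hvu := hg v u hu
  rw [← neg_sub u v, inner_neg_right] at huv
  rw [inner_sub_left]
  linarith

theorem norm_sub_smul_sub_sub_smul_sq_le {u v a b : E} {η D : ℝ} (hη : 0 ≤ η)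
    (hmono : 0 ≤ ⟪a - b, u - v⟫) (hD : ‖a - b‖ ≤ D) :
    ‖(u - η • a) - (v - η • b)‖ ^ 2 ≤ ‖u - v‖ ^ 2 + (η * D) ^ 2 := by
  have hsplit : (u - η • a) - (v - η • b) = (u - v) - η • (a - b) := by
    rw [smul_sub]; abel
  rw [hsplit, norm_sub_sq_real, real_inner_smul_right, norm_smul, Real.norm_of_nonneg hη,
    real_inner_comm]
  have : ‖a - b‖ ^ 2 ≤ D ^ 2 := pow_le_pow_left₀ (norm_nonneg _) hD 2
  nlinarith [mul_nonneg hη hmono, mul_le_mul_of_nonneg_left this (sq_nonneg η)]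

theorem norm_sub_smul_sub_sub_smul_le (u v a b : E) {η : ℝ} (hη : 0 ≤ η) :
    ‖(u - η • a) - (v - η • b)‖ ≤ ‖u - v‖ + η * (‖a‖ + ‖b‖) := by
  calc ‖(u - η • a) - (v - η • b)‖ = ‖(u - v) - (η • a - η • b)‖ := by congr 1; abel
    _ ≤ ‖u - v‖ + (‖η • a‖ + ‖η • b‖) :=
        (norm_sub_le _ _).trans (by gcongr; exact norm_sub_le _ _)
    _ = ‖u - v‖ + η * (‖a‖ + ‖b‖) := by
      rw [norm_smul, norm_smul, Real.norm_of_nonneg hη, mul_add]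

theorem norm_proj_step_sub_proj_step_sq_le {P : E → E} (hX : Convex ℝ X) (hPmem : ∀ u, P u ∈ X)
    (hPproj : ∀ u, ∀ w ∈ X, ‖P u - u‖ ≤ ‖w - u‖) {f : E → ℝ} {g : E → E} {L η : ℝ}
    (hg : ∀ u, ∀ w ∈ X, f u + ⟪g u, w - u⟫ ≤ f w) (hgL : ∀ u, ‖g u‖ ≤ L) {u v : E}
    (hu : u ∈ X) (hv : v ∈ X) (hη : 0 ≤ η) :
    ‖P (u - η • g u) - P (v - η • g v)‖ ^ 2 ≤ ‖u - v‖ ^ 2 + (2 * L * η) ^ 2 := by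
  have hD : ‖g u - g v‖ ≤ 2 * L := (norm_sub_le _ _).trans (by linarith [hgL u, hgL v])
  calc ‖P (u - η • g u) - P (v - η • g v)‖ ^ 2 ≤ ‖(u - η • g u) - (v - η • g v)‖ ^ 2 := by
        gcongr; exact norm_sub_le_of_forall_norm_sub_le_s8 hX hPmem hPproj _ _
    _ ≤ ‖u - v‖ ^ 2 + (η * (2 * L)) ^ 2 :=
        norm_sub_smul_sub_sub_smul_sq_le hη (inner_sub_nonneg_of_subgradient_s8 hg hu hv) hD
    _ = ‖u - v‖ ^ 2 + (2 * L * η) ^ 2 := by ring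

theorem norm_proj_step_sub_proj_step_le {P : E → E} (hX : Convex ℝ X) (hPmem : ∀ u, P u ∈ X)
    (hPproj : ∀ u, ∀ w ∈ X, ‖P u - u‖ ≤ ‖w - u‖) (u v : E) {a b : E} {L η : ℝ}
    (ha : ‖a‖ ≤ L) (hb : ‖b‖ ≤ L) (hη : 0 ≤ η) :
    ‖P (u - η • a) - P (v - η • b)‖ ≤ ‖u - v‖ + 2 * L * η := by
  calc ‖P (u - η • a) - P (v - η • b)‖ ≤ ‖(u - η • a) - (v - η • b)‖ :=
        norm_sub_le_of_forall_norm_sub_le_s8 hX hPmem hPproj _ _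
    _ ≤ ‖u - v‖ + η * (‖a‖ + ‖b‖) := norm_sub_smul_sub_sub_smul_le u v a b hη
    _ ≤ ‖u - v‖ + 2 * L * η := by nlinarith

end InnerProductSpace

namespace ProjSGD

variable {E : Type*} [NormedAddCommGroup E] [InnerProductSpace ℝ E] {X : Set E} {P : E → E}
  {f : ℕ → E → ℝ} {g g' : ℕ → E → E} {x y : ℕ → E} {η : ℕ → ℝ} {L : ℝ} {n r : ℕ}

theorem norm_sub_succ_le (hX : Convex ℝ X) (hPmem : ∀ u, P u ∈ X)
    (hPproj : ∀ u, ∀ w ∈ X, ‖P u - u‖ ≤ ‖w - u‖)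
    (hgL : ∀ t u, ‖g t u‖ ≤ L) (hg'L : ∀ t u, ‖g' t u‖ ≤ L)
    (hη : ∀ t, 0 ≤ η t) (hx : ∀ t, x (t + 1) = P (x t - η t • g t (x t)))
    (hy : ∀ t, y (t + 1) = P (y t - η t • g' t (y t))) (t : ℕ) :
    ‖x (t + 1) - y (t + 1)‖ ≤ ‖x t - y t‖ + 2 * L * η t := by
  rw [hx, hy]
  exact norm_proj_step_sub_proj_step_le hX hPmem hPproj _ _ (hgL _ _) (hg'L _ _) (hη t)

theorem norm_sub_succ_sq_le (hX : Convex ℝ X) (hPmem : ∀ u, P u ∈ X)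
    (hPproj : ∀ u, ∀ w ∈ X, ‖P u - u‖ ≤ ‖w - u‖)
    (hg : ∀ t u, ∀ w ∈ X, f t u + ⟪g t u, w - u⟫ ≤ f t w)
    (hgL : ∀ t u, ‖g t u‖ ≤ L) (hg'L : ∀ t u, ‖g' t u‖ ≤ L) (hgg' : ∀ t, t % n ≠ r → g t = g' t)
    (hη : ∀ t, 0 ≤ η t) (hx : ∀ t, x (t + 1) = P (x t - η t • g t (x t)))
    (hy : ∀ t, y (t + 1) = P (y t - η t • g' t (y t))) (hx1 : x 1 = y 1)
    {t : ℕ} (ht : 1 ≤ t) (hfirst : ¬ (t % n = r ∧ n < t)) :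
    ‖x (t + 1) - y (t + 1)‖ ^ 2 ≤ ‖x t - y t‖ ^ 2 + (2 * L * η t) ^ 2 := by
  obtain ⟨s, rfl⟩ := Nat.exists_eq_add_of_le' ht
  by_cases hr : (s + 1) % n = r
  · -- the first use of the perturbed loss: the trajectories still agree
    have hxy : x (s + 1) = y (s + 1) :=
      eq_of_forall_lt_update_eq (F := fun k u => P (u - η k • g k u))
        (F' := fun k u => P (u - η k • g' k u)) hx hy hx1 ht fun k _ hk => by
        have hkr : k % n ≠ r := fun h => by
          have := add_le_of_mod_eq_of_lt (h.trans hr.symm) hk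
          omega
        rw [hgg' k hkr]
    have h := norm_sub_succ_le hX hPmem hPproj hgL hg'L hη hx hy (s + 1)
    rw [hxy, sub_self, norm_zero, zero_add] at h
    rw [hxy, sub_self, norm_zero, zero_pow two_ne_zero, zero_add]
    exact pow_le_pow_left₀ (norm_nonneg _) h 2
  · rw [hx, hy, ← hgg' _ hr, hx s, hy s]
    exact norm_proj_step_sub_proj_step_sq_le hX hPmem hPproj (hg _) (hgL _) (hPmem _) (hPmem _)
      (hη _)

theorem norm_sub_le_of_antitone (hX : Convex ℝ X) (hPmem : ∀ u, P u ∈ X)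
    (hPproj : ∀ u, ∀ w ∈ X, ‖P u - u‖ ≤ ‖w - u‖)
    (hg : ∀ t u, ∀ w ∈ X, f t u + ⟪g t u, w - u⟫ ≤ f t w)
    (hgL : ∀ t u, ‖g t u‖ ≤ L) (hg'L : ∀ t u, ‖g' t u‖ ≤ L) (hgg' : ∀ t, t % n ≠ r → g t = g' t)
    (hη : ∀ t, 0 ≤ η t) (hanti : Antitone η) (hn : 0 < n)
    (hx : ∀ t, x (t + 1) = P (x t - η t • g t (x t)))
    (hy : ∀ t, y (t + 1) = P (y t - η t • g' t (y t))) (hx1 : x 1 = y 1) (m : ℕ) :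
    ‖x (m + 1) - y (m + 1)‖
      ≤ 2 * L * √(∑ t ∈ Icc 1 m, η t ^ 2) + 2 * L / n * ∑ t ∈ Icc 1 m, η t := by
  have hL : 0 ≤ L := (norm_nonneg _).trans (hgL 0 0)
  have hrec := le_sqrt_sum_sq_add_sum_filter (δ := fun t => ‖x t - y t‖)
    (c := fun t => 2 * L * η t) (fun t => t % n = r ∧ n < t) (fun t => norm_nonneg _)
    (fun t => by have := hη t; positivity) (by rw [hx1, sub_self, norm_zero])
    (fun t ht hfirst =>
      norm_sub_succ_sq_le hX hPmem hPproj hg hgL hg'L hgg' hη hx hy hx1 ht hfirst)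
    (fun t _ _ => norm_sub_succ_le hX hPmem hPproj hgL hg'L hη hx hy t) m
  have hsqrt : √(∑ t ∈ Icc 1 m, (2 * L * η t) ^ 2) = 2 * L * √(∑ t ∈ Icc 1 m, η t ^ 2) := by
    simp_rw [mul_pow _ (η _), ← mul_sum]
    rw [Real.sqrt_mul (sq_nonneg _), Real.sqrt_sq (by positivity)]
  have hperturbed : ∑ t ∈ (Icc 1 m).filter (fun t => t % n = r ∧ n < t), 2 * L * η t
      ≤ 2 * L / n * ∑ t ∈ Icc 1 m, η t := by
    have hwindow := mul_sum_filter_mod_eq_le_sum hη hanti n r m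
    rw [← mul_sum, div_mul_eq_mul_div, le_div_iff₀ (by exact_mod_cast hn)]
    nlinarith
  linarith

end ProjSGD

theorem stmt8_general {d n : ℕ} (hn : 0 < n)
    (X : Set (EuclideanSpace ℝ (Fin d))) (hXconvex : Convex ℝ X)
    (R L : ℝ) (hL : 0 ≤ L)
    (hXR : X ⊆ Metric.closedBall 0 R)
    (P : EuclideanSpace ℝ (Fin d) → EuclideanSpace ℝ (Fin d))
    (hPmem : ∀ u, P u ∈ X)
    (hPproj : ∀ u, ∀ w ∈ X, ‖P u - u‖ ≤ ‖w - u‖)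
    (π : Equiv.Perm (Fin n)) (i : Fin n)
    (f : Fin n → EuclideanSpace ℝ (Fin d) → ℝ)
    (G G' : Fin n → EuclideanSpace ℝ (Fin d) → EuclideanSpace ℝ (Fin d))
    (hG : ∀ j u, ∀ w ∈ X, f j u + (inner ℝ (G j u) (w - u) : ℝ) ≤ f j w)
    (hGL : ∀ j u, ‖G j u‖ ≤ L) (hG'L : ∀ j u, ‖G' j u‖ ≤ L)
    (hGeq : ∀ j, j ≠ i → G j = G' j)
    (T : ℕ) (hT : 1 ≤ T)
    (η : ℕ → ℝ) (hη : ∀ t, 0 ≤ η t) (hmono : ∀ s t, s ≤ t → η t ≤ η s)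
    (x y : ℕ → EuclideanSpace ℝ (Fin d))
    (hx1 : x 1 = y 1)
    (hxstep : ∀ t, x (t + 1) = P (x t - η t • G (π ⟨t % n, Nat.mod_lt t hn⟩) (x t)))
    (hystep : ∀ t, y (t + 1) = P (y t - η t • G' (π ⟨t % n, Nat.mod_lt t hn⟩) (y t))) :
    ‖x T - y T‖ ≤ min (2 * R)
      (2 * L * Real.sqrt (∑ t ∈ Finset.Icc 1 (T - 1), η t ^ 2)
        + (4 * L / n) * ∑ t ∈ Finset.Icc 1 (T - 1), η t) := by
  have hunperturbed (t : ℕ) (ht : t % n ≠ π.symm i) :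
      G (π ⟨t % n, Nat.mod_lt t hn⟩) = G' (π ⟨t % n, Nat.mod_lt t hn⟩) :=
    hGeq _ fun h => ht (by rw [← h, Equiv.symm_apply_apply])
  obtain ⟨s, rfl⟩ := Nat.exists_eq_add_of_le' hT
  rw [Nat.add_sub_cancel]
  refine le_min ?_ ((ProjSGD.norm_sub_le_of_antitone hXconvex hPmem hPproj (fun t => hG _)
    (fun t => hGL _) (fun t => hG'L _) hunperturbed hη hmono hn hxstep hystep hx1 s).trans ?_)
  · have hxR := mem_closedBall_zero_iff.1 (hXR (hxstep s ▸ hPmem _))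
    have hyR := mem_closedBall_zero_iff.1 (hXR (hystep s ▸ hPmem _))
    linarith [norm_sub_le (x (s + 1)) (y (s + 1))]
  · have := sum_nonneg fun t (_ : t ∈ Icc 1 s) => hη t
    gcongr
    norm_num

/-- Uniform argument stability of fixed-permutation SGD with nonincreasing step sizes:
`‖x^T − y^T‖ ≤ min{2R, 2L√(Ση²) + (4L/n)Ση}`. -/
theorem stmt8 {d n : ℕ} (hn : 0 < n)
    (X : Set (EuclideanSpace ℝ (Fin d)))
    (hXclosed : IsClosed X) (hXconvex : Convex ℝ X)
    (R L : ℝ) (hL : 0 ≤ L)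
    (hXR : X ⊆ Metric.closedBall 0 R)
    (P : EuclideanSpace ℝ (Fin d) → EuclideanSpace ℝ (Fin d))
    (hPmem : ∀ u, P u ∈ X)
    (hPproj : ∀ u, ∀ w ∈ X, ‖P u - u‖ ≤ ‖w - u‖)
    (π : Equiv.Perm (Fin n)) (i : Fin n)
    (f f' : Fin n → EuclideanSpace ℝ (Fin d) → ℝ)
    (hdiff : ∀ j, j ≠ i → f j = f' j)
    (hconv : ∀ j, ConvexOn ℝ X (f j)) (hconv' : ∀ j, ConvexOn ℝ X (f' j))
    (hLip : ∀ j, ∀ u ∈ X, ∀ v ∈ X, |f j u - f j v| ≤ L * ‖u - v‖)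
    (hLip' : ∀ j, ∀ u ∈ X, ∀ v ∈ X, |f' j u - f' j v| ≤ L * ‖u - v‖)
    (G G' : Fin n → EuclideanSpace ℝ (Fin d) → EuclideanSpace ℝ (Fin d))
    (hG : ∀ j u, ∀ w ∈ X, f j u + (inner ℝ (G j u) (w - u) : ℝ) ≤ f j w)
    (hG' : ∀ j u, ∀ w ∈ X, f' j u + (inner ℝ (G' j u) (w - u) : ℝ) ≤ f' j w)
    (hGL : ∀ j u, ‖G j u‖ ≤ L) (hG'L : ∀ j u, ‖G' j u‖ ≤ L)
    (hGeq : ∀ j, j ≠ i → G j = G' j)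
    (T : ℕ) (hT : 1 ≤ T)
    (η : ℕ → ℝ) (hη : ∀ t, 0 ≤ η t) (hmono : ∀ s t, s ≤ t → η t ≤ η s)
    (x y : ℕ → EuclideanSpace ℝ (Fin d))
    (hx1 : x 1 = y 1) (hx1X : x 1 ∈ X)
    (hxstep : ∀ t, x (t + 1) = P (x t - η t • G (π ⟨t % n, Nat.mod_lt t hn⟩) (x t)))
    (hystep : ∀ t, y (t + 1) = P (y t - η t • G' (π ⟨t % n, Nat.mod_lt t hn⟩) (y t))) :
    ‖x T - y T‖ ≤ min (2 * R)
      (2 * L * Real.sqrt (∑ t ∈ Finset.Icc 1 (T - 1), η t ^ 2)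
        + (4 * L / n) * ∑ t ∈ Finset.Icc 1 (T - 1), η t) :=
  stmt8_general hn X hXconvex R L hL hXR P hPmem hPproj π i f G G' hG hGL hG'L hGeq T hT η hη hmono
    x y hx1 hxstep hystep
end

section
/- Consider the deterministic full-batch GD lower bound construction in ℝ^d: losses f(x,0) = max{0, x_1 − ν, …, x_D − ν} and f(x,1) = ⟨r, x⟩/K with r = −(e_1 + ⋯ + e_D). With datasets S = (1,0,…,0) and S' = (0,…,0), starting from x^1 = y^1 = 0, if ν < η/(nK) and the adversarial subgradient oracle returns e_t at the t-th active coordinate, then for every t ∈ [D+1], the GD iterates satisfy x^{t+1} = −t(η/(nK)) r − η((n−1)/n) Σ_{s=1}^{t−1} e_s, while y^t = 0 for all t. -/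
/-!
While coordinate `t` of the iterate is the unique largest one and exceeds `ν`, the vector `e_t`
is a subgradient of the hinge-max loss there, so the adversarial oracle may return it. The linear
term pushes all coordinates up by `η/(nK)` per step, while the oracle pushes coordinate `t` back
down by `η(n-1)/n`; hence after step `t` coordinate `t + 1` is the largest one, equal to
`t η/(nK) > ν`, and the closed form follows by induction.
-/

open Finset
open scoped RealInnerProductSpace

noncomputable def hingeMax {ι E : Type*} [NormedAddCommGroup E] [InnerProductSpace ℝ E]
    (I : Finset ι) (hI : I.Nonempty) (e : ι → E) (ν : ℝ) (u : E) : ℝ :=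
  max 0 (I.sup' hI fun s => ⟪e s, u⟫ - ν)

section HingeMax

variable {ι E : Type*} [NormedAddCommGroup E] [InnerProductSpace ℝ E]
  {I : Finset ι} {hI : I.Nonempty} {e : ι → E} {ν : ℝ}

theorem hingeMax_nonneg (u : E) : 0 ≤ hingeMax I hI e ν u :=
  le_max_left _ _

theorem hingeMax_zero (hν : 0 ≤ ν) : hingeMax I hI e ν 0 = 0 := by
  refine max_eq_left (sup'_le _ _ fun s _ => ?_)
  simpa only [inner_zero_right, zero_sub, neg_nonpos] using hν

theorem hingeMax_zero_le (hν : 0 ≤ ν) (w : E) : hingeMax I hI e ν 0 ≤ hingeMax I hI e ν w :=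
  (hingeMax_zero hν).trans_le (hingeMax_nonneg w)

theorem hingeMax_add_inner_le_of_active {j : ι} (hj : j ∈ I) {x : E}
    (hmax : ∀ s ∈ I, ⟪e s, x⟫ ≤ ⟪e j, x⟫) (hν : ν ≤ ⟪e j, x⟫) (w : E) :
    hingeMax I hI e ν x + ⟪e j, w - x⟫ ≤ hingeMax I hI e ν w := by
  have hx : hingeMax I hI e ν x ≤ ⟪e j, x⟫ - ν :=
    max_le (by linarith) (sup'_le _ _ fun s hs => by linarith [hmax s hs])
  have hw : ⟪e j, w⟫ - ν ≤ hingeMax I hI e ν w :=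
    (le_sup' (fun s => ⟪e s, w⟫ - ν) hj).trans (le_max_right _ _)
  rw [inner_sub_right]
  linarith

end HingeMax

section Iterates

variable {E : Type*} [NormedAddCommGroup E] [InnerProductSpace ℝ E] {e : ℕ → E} {D : ℕ}

theorem inner_sum_Icc_of_orthonormal
    (horth : ∀ s ∈ Icc 1 D, ∀ s' ∈ Icc 1 D, ⟪e s, e s'⟫ = if s = s' then 1 else 0)
    {s k : ℕ} (hs : s ∈ Icc 1 D) (hk : k ≤ D) :
    ⟪e s, ∑ i ∈ Icc 1 k, e i⟫ = if s ≤ k then 1 else 0 := by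
  rw [inner_sum, sum_congr rfl fun i hi => horth s hs i (Icc_subset_Icc_right hk hi),
    sum_ite_eq]
  simp only [mem_Icc, (mem_Icc.mp hs).1, true_and]

theorem inner_iterate_of_orthonormal
    (horth : ∀ s ∈ Icc 1 D, ∀ s' ∈ Icc 1 D, ⟪e s, e s'⟫ = if s = s' then 1 else 0)
    {r : E} (hr : r = -∑ s ∈ Icc 1 D, e s) (p c : ℝ)
    {s k : ℕ} (hs : s ∈ Icc 1 D) (hk : k ≤ D) :
    ⟪e s, -p • r - c • ∑ i ∈ Icc 1 k, e i⟫ = p - if s ≤ k then c else 0 := by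
  rw [hr, inner_sub_right, real_inner_smul_right, real_inner_smul_right, inner_neg_right,
    inner_sum_Icc_of_orthonormal horth hs le_rfl, inner_sum_Icc_of_orthonormal horth hs hk,
    if_pos (mem_Icc.mp hs).2]
  split_ifs <;> ring

theorem hingeMax_add_inner_le_at_iterate
    (horth : ∀ s ∈ Icc 1 D, ∀ s' ∈ Icc 1 D, ⟪e s, e s'⟫ = if s = s' then 1 else 0)
    {r : E} (hr : r = -∑ s ∈ Icc 1 D, e s) {hI : (Icc 1 D).Nonempty} {ν p c : ℝ} (hνp : ν ≤ p) (hc : 0 ≤ c)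
    {m : ℕ} (hm : m ∈ Icc 1 D) (w : E) :
    let x := -p • r - c • ∑ i ∈ Icc 1 (m - 1), e i
    hingeMax (Icc 1 D) hI e ν x + ⟪e m, w - x⟫ ≤ hingeMax (Icc 1 D) hI e ν w := by
  have hk : m - 1 ≤ D := by have := (mem_Icc.mp hm).2; omega
  have hxm := inner_iterate_of_orthonormal horth hr p c hm hk
  rw [if_neg (by have := (mem_Icc.mp hm).1; omega), sub_zero] at hxm
  refine hingeMax_add_inner_le_of_active hm (fun s hs => ?_) (hνp.trans_eq hxm.symm) w
  rw [hxm, inner_iterate_of_orthonormal horth hr p c hs hk]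
  split_ifs <;> linarith

end Iterates

theorem gd_iterate_eq {E : Type*} [AddCommGroup E] [Module ℝ E] {x g e : ℕ → E} {r : E}
    {η α β : ℝ} {T : ℕ} (hx1 : x 1 = 0) (hg1 : g 1 = 0)
    (hg : ∀ t, 2 ≤ t → t ≤ T → g t = e (t - 1))
    (hstep : ∀ t, 1 ≤ t → t ≤ T → x (t + 1) = x t - η • (α • r + β • g t))
    (t : ℕ) (ht1 : 1 ≤ t) (htT : t ≤ T) :
    x (t + 1) = -((t : ℝ) * (η * α)) • r - (η * β) • ∑ s ∈ Icc 1 (t - 1), e s := by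
  obtain ⟨k, rfl⟩ : ∃ k, t = k + 1 := ⟨t - 1, by omega⟩
  rw [Nat.add_sub_cancel]
  induction k with
  | zero =>
    rw [hstep 1 le_rfl htT, hx1, hg1, Icc_eq_empty_of_lt zero_lt_one, sum_empty]
    push_cast
    module
  | succ k ih =>
    rw [hstep (k + 2) (by omega) htT, ih (by omega) (by omega), hg (k + 2) (by omega) htT,
      sum_Icc_succ_top (by omega)]
    push_cast
    module

/-- The deterministic full-batch GD lower bound construction: closed form of the iterates,
validity of the adversarial subgradient choices, and `y^t = 0`. -/
theorem stmt13 {d n D : ℕ} (hn : 0 < n) (hD : 0 < D) (hDd : D ≤ d)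
    (η ν K : ℝ) (hη : 0 < η) (hν : 0 < ν)
    (hνs : ν < η / (n * K))
    (e : ℕ → EuclideanSpace ℝ (Fin d))
    (he : ∀ s (h1 : 1 ≤ s) (h2 : s ≤ D),
      e s = EuclideanSpace.single (⟨s - 1, by omega⟩ : Fin d) (1 : ℝ))
    (r : EuclideanSpace ℝ (Fin d)) (hr : r = -∑ s ∈ Finset.Icc 1 D, e s)
    (f0 : EuclideanSpace ℝ (Fin d) → ℝ)
    (hf0 : ∀ u, f0 u = max 0 ((Finset.Icc 1 D).sup'
      (Finset.nonempty_Icc.mpr hD) (fun s => (inner ℝ (e s) u : ℝ) - ν)))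
    (g : ℕ → EuclideanSpace ℝ (Fin d))
    (hg1 : g 1 = 0) (hgt : ∀ t, 2 ≤ t → t ≤ D + 1 → g t = e (t - 1))
    (x : ℕ → EuclideanSpace ℝ (Fin d)) (hx1 : x 1 = 0)
    (hxstep : ∀ t, 1 ≤ t → t ≤ D + 1 →
      x (t + 1) = x t - η • (((1 : ℝ) / (n * K)) • r + (((n : ℝ) - 1) / n) • g t))
    (y : ℕ → EuclideanSpace ℝ (Fin d)) (hy1 : y 1 = 0)
    (hystep : ∀ t, y (t + 1) = y t - η • (0 : EuclideanSpace ℝ (Fin d))) :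
    (∀ t, 1 ≤ t → t ≤ D + 1 →
      x (t + 1) = -((t : ℝ) * (η / (n * K))) • r
        - (η * (((n : ℝ) - 1) / n)) • ∑ s ∈ Finset.Icc 1 (t - 1), e s)
    ∧ (∀ t, 1 ≤ t → t ≤ D + 1 →
        ∀ w, f0 (x t) + (inner ℝ (g t) (w - x t) : ℝ) ≤ f0 w)
    ∧ (∀ w, f0 0 ≤ f0 w)
    ∧ (∀ t, 1 ≤ t → y t = 0) := by
  have hf : f0 = hingeMax (Icc 1 D) (nonempty_Icc.mpr hD) e ν := funext hf0
  have horth : ∀ s ∈ Icc 1 D, ∀ s' ∈ Icc 1 D, ⟪e s, e s'⟫ = if s = s' then 1 else 0 := by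
    intro s hs s' hs'
    rw [mem_Icc] at hs hs'
    rw [he s hs.1 hs.2, he s' hs'.1 hs'.2, orthonormal_iff_ite.mp EuclideanSpace.orthonormal_single]
    exact if_congr (by rw [Fin.mk.injEq]; omega) rfl rfl
  have hc : 0 ≤ η * (((n : ℝ) - 1) / n) :=
    mul_nonneg hη.le (div_nonneg (sub_nonneg.mpr (by exact_mod_cast hn)) n.cast_nonneg)
  have hclosed := gd_iterate_eq hx1 hg1 hgt hxstep
  simp only [mul_one_div] at hclosed
  refine ⟨hclosed, fun t ht1 ht2 w => ?_, hf ▸ hingeMax_zero_le hν.le,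
    Nat.le_induction hy1 fun t _ ih => by rw [hystep, ih, smul_zero, sub_zero]⟩
  obtain rfl | ⟨m, rfl, hm1⟩ : t = 1 ∨ ∃ m, t = m + 1 ∧ 1 ≤ m := by
    rcases eq_or_lt_of_le ht1 with h | h
    · exact .inl h.symm
    · exact .inr ⟨t - 1, by omega, by omega⟩
  · simpa [hx1, hg1, hf] using hingeMax_zero_le hν.le w
  · have hνp : ν ≤ m * (η / (n * K)) :=
      hνs.le.trans (le_mul_of_one_le_left (hν.trans hνs).le (by exact_mod_cast hm1))
    rw [hgt (m + 1) (by omega) ht2, Nat.add_sub_cancel, hclosed m hm1 (by omega), hf]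
    exact hingeMax_add_inner_le_at_iterate horth hr hνp hc (mem_Icc.mpr ⟨hm1, by omega⟩) w
end

section
/- Let τ be a geometric-type random variable with P[τ = t] = (1/n)(1 − 1/n)^{t−1} for t ≥ 1 and let η > 0, T ≥ 1. Then (η/n) Σ_{t=1}^{T/2} √(T/2 − t} (1 − 1/n)^{t−1} is Ω(η T^{3/2}/n) when T ≤ n, and Ω(η √T) when T > n. -/
/-!
Every one of the first `K` terms of the sum is at least `(3/4) √(T/2 - K)` as soon as `4 (K - 1) ≤ n`,
by Bernoulli's inequality `(1 - 1/n)^k ≥ 1 - k/n`. Taking `K ≈ min(T, n)/4` and noting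
`T/2 - K ≥ T/9` gives `Σ ≳ min(T, n) √T`, which is `T^{3/2}` when `T ≤ n` and `n √T` when `n < T`.
-/

open Finset

/-- `n · E[√(M - τ); τ ≤ M]` for `τ` geometric with success probability `1/n`. -/
noncomputable def geomWeightedSqrtSum (n M : ℕ) : ℝ :=
  ∑ t ∈ Icc 1 M, Real.sqrt ((M - t : ℕ) : ℝ) * (1 - 1 / (n : ℝ)) ^ (t - 1)

lemma three_quarters_le_one_sub_one_div_pow {n k : ℕ} (h : 4 * k ≤ n) :
    (3 / 4 : ℝ) ≤ (1 - 1 / (n : ℝ)) ^ k := by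
  have bernoulli := one_add_mul_sub_le_pow
    (by linarith [Nat.one_sub_one_div_cast_nonneg (α := ℝ) n]) k (a := 1 - 1 / (n : ℝ))
  rcases Nat.eq_zero_or_pos n with rfl | hn
  · obtain rfl : k = 0 := by omega
    norm_num
  have hkn : (k : ℝ) / n ≤ 1 / 4 := by
    rw [div_le_iff₀ (by exact_mod_cast hn)]
    have : (4 * k : ℝ) ≤ n := by exact_mod_cast h
    linarith
  calc (3 / 4 : ℝ) ≤ 1 - k / n := by linarith
    _ = 1 + k * ((1 - 1 / (n : ℝ)) - 1) := by ring
    _ ≤ _ := bernoulli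

lemma mul_sqrt_le_geomWeightedSqrtSum {n M K : ℕ} (hKM : K ≤ M) (hKn : 4 * (K - 1) ≤ n) :
    (3 / 4 : ℝ) * K * Real.sqrt ((M - K : ℕ) : ℝ) ≤ geomWeightedSqrtSum n M := by
  have term_ge : ∀ t ∈ Icc 1 K, (3 / 4 : ℝ) * Real.sqrt ((M - K : ℕ) : ℝ) ≤
      Real.sqrt ((M - t : ℕ) : ℝ) * (1 - 1 / (n : ℝ)) ^ (t - 1) := by
    intro t ht
    rw [mem_Icc] at ht
    rw [mul_comm]
    gcongr
    · omega
    · exact three_quarters_le_one_sub_one_div_pow (by omega)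
  calc (3 / 4 : ℝ) * K * Real.sqrt ((M - K : ℕ) : ℝ)
      = ∑ _t ∈ Icc 1 K, (3 / 4 : ℝ) * Real.sqrt ((M - K : ℕ) : ℝ) := by
        rw [sum_const, Nat.card_Icc, Nat.add_sub_cancel, nsmul_eq_mul]
        ring
    _ ≤ ∑ t ∈ Icc 1 K, Real.sqrt ((M - t : ℕ) : ℝ) * (1 - 1 / (n : ℝ)) ^ (t - 1) :=
        sum_le_sum term_ge
    _ ≤ geomWeightedSqrtSum n M :=
        sum_le_sum_of_subset_of_nonneg (Icc_subset_Icc_right hKM) fun t _ _ =>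
          mul_nonneg (Real.sqrt_nonneg _) (pow_nonneg (Nat.one_sub_one_div_cast_nonneg n) _)

lemma sqrt_le_three_mul_sqrt {a b : ℕ} (h : a ≤ 9 * b) :
    Real.sqrt a ≤ 3 * Real.sqrt b := by
  rw [Real.sqrt_le_iff, mul_pow, Real.sq_sqrt (Nat.cast_nonneg b)]
  exact ⟨by positivity, by norm_num; exact_mod_cast h⟩

lemma min_mul_sqrt_le_geomWeightedSqrtSum {n T : ℕ} (hT : 4 ≤ T) :
    ((min T n : ℕ) : ℝ) * Real.sqrt T ≤ 32 * geomWeightedSqrtSum n (T / 2) := by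
  set K := min (T / 4) (n / 4 + 1)
  have hsum := mul_sqrt_le_geomWeightedSqrtSum (n := n) (M := T / 2) (K := K) (by omega) (by omega)
  have hmin : ((min T n : ℕ) : ℝ) ≤ 8 * K := by exact_mod_cast (by omega : min T n ≤ 8 * K)
  have hsqrt := sqrt_le_three_mul_sqrt (show T ≤ 9 * (T / 2 - K) by omega)
  calc ((min T n : ℕ) : ℝ) * Real.sqrt T
      ≤ (8 * K) * (3 * Real.sqrt ((T / 2 - K : ℕ) : ℝ)) := by gcongr
    _ = 32 * ((3 / 4 : ℝ) * K * Real.sqrt ((T / 2 - K : ℕ) : ℝ)) := by ring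
    _ ≤ 32 * geomWeightedSqrtSum n (T / 2) := by gcongr

/-- The core estimate in the lower bound for sampling-with-replacement SGD:
`(η/n) Σ_{t=1}^{T/2} √(T/2 − t) (1 − 1/n)^{t−1}` is `Ω(η T^{3/2}/n)` when `T ≤ n`
and `Ω(η √T)` when `T > n`. -/
theorem stmt15 : ∃ c : ℝ, 0 < c ∧ ∃ T0 : ℕ, ∀ (n T : ℕ) (η : ℝ),
    0 < η → 1 ≤ n → T0 ≤ T →
    ((T ≤ n →
      c * η * (T : ℝ) * Real.sqrt T / n ≤
        (η / n) * ∑ t ∈ Finset.Icc 1 (T / 2),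
          Real.sqrt ((T / 2 - t : ℕ) : ℝ) * (1 - 1 / (n : ℝ)) ^ (t - 1))
     ∧ (n < T →
      c * η * Real.sqrt T ≤
        (η / n) * ∑ t ∈ Finset.Icc 1 (T / 2),
          Real.sqrt ((T / 2 - t : ℕ) : ℝ) * (1 - 1 / (n : ℝ)) ^ (t - 1))) := by
  refine ⟨1 / 32, by norm_num, 4, fun n T η hη hn hT => ?_⟩
  have hn0 : (n : ℝ) ≠ 0 := by positivity
  have hbound := min_mul_sqrt_le_geomWeightedSqrtSum (n := n) hT
  have hηn : 0 ≤ η / n := by positivity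
  change (_ → _ ≤ η / n * geomWeightedSqrtSum n (T / 2)) ∧ (_ → _ ≤ η / n * geomWeightedSqrtSum n (T / 2))
  constructor
  · intro hTn
    rw [min_eq_left hTn] at hbound
    calc 1 / 32 * η * T * Real.sqrt T / n = η / n * (T * Real.sqrt T / 32) := by ring
      _ ≤ η / n * geomWeightedSqrtSum n (T / 2) := by gcongr; linarith
  · intro hnT
    rw [min_eq_right hnT.le] at hbound
    calc 1 / 32 * η * Real.sqrt T = η / n * (n * Real.sqrt T / 32) := by field_simp
      _ ≤ η / n * geomWeightedSqrtSum n (T / 2) := by gcongr; linarith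
end

section
/- Fixed permutation (incremental) subgradient descent with constant step size η_k within epoch k, on an empirical objective F_S that is the average of n convex L-Lipschitz losses over a closed convex set X, satisfies for every y ∈ X: η_k [F_S(x^k) − F_S(y)] ≤ (1/(2n))(‖x^k − y‖² − ‖x^{k+1} − y‖²) + η_k² L²(n+2)/2, where x^k and x^{k+1} are the iterates at the start and end of epoch k. -/
/-!
Each step of projected subgradient descent satisfies the one-step inequality
`2η (f_t(x_t) - f_t(y)) ≤ ‖x_t - y‖² - ‖x_{t+1} - y‖² + η²L²`, by nonexpansiveness of the
projection towards points of `X` and the subgradient inequality. Within an epoch the iterate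
drifts by at most `ηLt` from its starting point `x_0`, so by Lipschitz continuity
`f_t(x_0) ≤ f_t(x_t) + ηL²t`. The error terms `η²L²(2t + 1) = η²L²((t+1)² - t²)` telescope
together with the distances, and averaging over the `n` losses gives the bound with `n` in
place of `n + 2`.
-/

open Finset
open scoped RealInnerProductSpace

section ProjectedSubgradient

variable {E : Type*} [NormedAddCommGroup E] [InnerProductSpace ℝ E]

def IsNearestPoint (X : Set E) (v p : E) : Prop :=
  p ∈ X ∧ ∀ w ∈ X, ‖p - v‖ ≤ ‖w - v‖

namespace IsNearestPoint

variable {X : Set E} {v p w : E}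

theorem real_inner_sub_nonpos (hX : Convex ℝ X) (hp : IsNearestPoint X v p) (hw : w ∈ X) :
    ⟪v - p, w - p⟫ ≤ 0 := by
  have : Nonempty X := ⟨⟨p, hp.1⟩⟩
  refine (norm_eq_iInf_iff_real_inner_le_zero hX hp.1).mp (le_antisymm ?_ ?_) w hw
  · exact le_ciInf fun z => by simpa only [norm_sub_rev v] using hp.2 z z.2
  · exact ciInf_le (f := fun z : X => ‖v - z‖)
      ⟨0, Set.forall_mem_range.2 fun _ => norm_nonneg _⟩ ⟨p, hp.1⟩

theorem norm_sub_sq_le (hX : Convex ℝ X) (hp : IsNearestPoint X v p) (hw : w ∈ X) :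
    ‖p - w‖ ^ 2 ≤ ‖v - w‖ ^ 2 := by
  have hangle : ⟪v - p, p - w⟫ = -⟪v - p, w - p⟫ := by rw [← inner_neg_right, neg_sub]
  have hsplit : ‖v - w‖ ^ 2 = ‖v - p‖ ^ 2 + 2 * ⟪v - p, p - w⟫ + ‖p - w‖ ^ 2 := by
    rw [← norm_add_sq_real, sub_add_sub_cancel]
  linarith [hp.real_inner_sub_nonpos hX hw, sq_nonneg ‖v - p‖]

theorem norm_sub_le (hX : Convex ℝ X) (hp : IsNearestPoint X v p) (hw : w ∈ X) :
    ‖p - w‖ ≤ ‖v - w‖ :=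
  pow_le_pow_iff_left₀ (norm_nonneg _) (norm_nonneg _) two_ne_zero |>.mp
    (hp.norm_sub_sq_le hX hw)

variable {x g y : E} {η : ℝ}

theorem norm_sub_le_of_step (hX : Convex ℝ X) (hp : IsNearestPoint X (x - η • g) p)
    (hx : x ∈ X) (hη : 0 ≤ η) : ‖p - x‖ ≤ η * ‖g‖ := by
  simpa [norm_smul, abs_of_nonneg hη] using hp.norm_sub_le hX hx

theorem two_mul_sub_le_of_step {f : E → ℝ} (hX : Convex ℝ X)
    (hp : IsNearestPoint X (x - η • g) p) (hη : 0 ≤ η) (hy : y ∈ X)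
    (hsub : f x + ⟪g, y - x⟫ ≤ f y) :
    2 * η * (f x - f y) ≤ ‖x - y‖ ^ 2 - ‖p - y‖ ^ 2 + η ^ 2 * ‖g‖ ^ 2 := by
  have hexpand : ‖x - η • g - y‖ ^ 2 = ‖x - y‖ ^ 2 - 2 * η * ⟪g, x - y⟫ + η ^ 2 * ‖g‖ ^ 2 := by
    rw [sub_right_comm, norm_sub_sq_real, real_inner_smul_right, real_inner_comm, norm_smul,
      Real.norm_eq_abs, mul_pow, sq_abs]
    ring
  have hflip : ⟪g, y - x⟫ = -⟪g, x - y⟫ := by rw [← inner_neg_right, neg_sub]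
  have hgap : 2 * η * (f x - f y) ≤ 2 * η * ⟪g, x - y⟫ :=
    mul_le_mul_of_nonneg_left (by linarith) (by positivity)
  linarith [hp.norm_sub_sq_le hX hy]

end IsNearestPoint

variable {X : Set E} {n : ℕ} {P : E → E} {x g : ℕ → E} {η L : ℝ}

theorem mem_of_projected_steps (hP : ∀ v, IsNearestPoint X v (P v)) (hx0 : x 0 ∈ X)
    (hstep : ∀ i : Fin n, x (i + 1) = P (x i - η • g i)) : ∀ t ≤ n, x t ∈ X
  | 0, _ => hx0
  | t + 1, ht => hstep ⟨t, ht⟩ ▸ (hP _).1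

theorem norm_sub_le_of_projected_steps (hX : Convex ℝ X) (hP : ∀ v, IsNearestPoint X v (P v))
    (hη : 0 ≤ η) (hgL : ∀ t, ‖g t‖ ≤ L) (hx0 : x 0 ∈ X)
    (hstep : ∀ i : Fin n, x (i + 1) = P (x i - η • g i)) {t : ℕ} (ht : t ≤ n) :
    ‖x t - x 0‖ ≤ η * L * t := by
  have hmove : ∀ {k}, k < t → dist (x k) (x (k + 1)) ≤ η * L := fun {k} hk => by
    have hk' : k < n := hk.trans_le ht
    rw [dist_comm, dist_eq_norm, hstep ⟨k, hk'⟩]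
    calc ‖P (x k - η • g k) - x k‖ ≤ η * ‖g k‖ :=
          (hP _).norm_sub_le_of_step hX (mem_of_projected_steps hP hx0 hstep k hk'.le) hη
      _ ≤ η * L := mul_le_mul_of_nonneg_left (hgL k) hη
  simpa [dist_eq_norm', mul_comm] using dist_le_range_sum_of_dist_le t hmove

theorem two_mul_sum_sub_le_of_projected_steps (hX : Convex ℝ X)
    (hP : ∀ v, IsNearestPoint X v (P v)) (hη : 0 ≤ η) (f : Fin n → E → ℝ)
    (hLip : ∀ i, ∀ u ∈ X, ∀ v ∈ X, |f i u - f i v| ≤ L * ‖u - v‖)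
    (hgL : ∀ t, ‖g t‖ ≤ L) (hx0 : x 0 ∈ X)
    (hsub : ∀ i : Fin n, ∀ w ∈ X, f i (x i) + ⟪g i, w - x i⟫ ≤ f i w)
    (hstep : ∀ i : Fin n, x (i + 1) = P (x i - η • g i)) {y : E} (hy : y ∈ X) :
    2 * η * ∑ i, (f i (x 0) - f i y) ≤ ‖x 0 - y‖ ^ 2 - ‖x n - y‖ ^ 2 + (η * L * n) ^ 2 := by
  have hL : 0 ≤ L := (norm_nonneg _).trans (hgL 0)
  set Φ : ℕ → ℝ := fun t => ‖x t - y‖ ^ 2 - (η * L * t) ^ 2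
  have hdescent : ∀ i : Fin n, 2 * η * (f i (x 0) - f i y) ≤ Φ i - Φ (i + 1) := by
    intro i
    have hxi := mem_of_projected_steps hP hx0 hstep i i.2.le
    have hone := (hstep i ▸ hP (x i - η • g i)).two_mul_sub_le_of_step hX hη hy (hsub i y hy)
    have hgrad : η ^ 2 * ‖g i‖ ^ 2 ≤ η ^ 2 * L ^ 2 := by gcongr; exact hgL i
    have hdrift : f i (x 0) - f i (x i) ≤ η * L ^ 2 * i := calc
      f i (x 0) - f i (x i) ≤ L * ‖x i - x 0‖ :=
        (le_abs_self _).trans (norm_sub_rev (x 0) (x i) ▸ hLip i _ hx0 _ hxi)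
      _ ≤ L * (η * L * i) :=
        mul_le_mul_of_nonneg_left (norm_sub_le_of_projected_steps hX hP hη hgL hx0 hstep i.2.le) hL
      _ = η * L ^ 2 * i := by ring
    have hscaled := mul_le_mul_of_nonneg_left hdrift (by positivity : (0 : ℝ) ≤ 2 * η)
    simp only [Φ]
    push_cast
    linarith
  calc 2 * η * ∑ i, (f i (x 0) - f i y) ≤ ∑ i : Fin n, (Φ i - Φ (i + 1)) := by
        rw [mul_sum]; exact sum_le_sum fun i _ => hdescent i
    _ = Φ 0 - Φ n := by
        rw [Fin.sum_univ_eq_sum_range (fun t => Φ t - Φ (t + 1)), sum_range_sub']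
    _ = ‖x 0 - y‖ ^ 2 - ‖x n - y‖ ^ 2 + (η * L * n) ^ 2 := by simp only [Φ]; push_cast; ring

end ProjectedSubgradient

/-- One epoch of fixed-permutation (incremental) subgradient descent with constant step
size `η` within the epoch: for every `y ∈ X`,
`η(F_S(x^k) − F_S(y)) ≤ (1/(2n))(‖x^k − y‖² − ‖x^{k+1} − y‖²) + η²L²(n+2)/2`. -/
theorem stmt17 {d n : ℕ} (hn : 0 < n)
    (X : Set (EuclideanSpace ℝ (Fin d)))
    (hXconvex : Convex ℝ X)
    (P : EuclideanSpace ℝ (Fin d) → EuclideanSpace ℝ (Fin d))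
    (hPmem : ∀ u, P u ∈ X)
    (hPproj : ∀ u, ∀ w ∈ X, ‖P u - u‖ ≤ ‖w - u‖)
    (L η : ℝ) (hη : 0 ≤ η)
    (fi : Fin n → EuclideanSpace ℝ (Fin d) → ℝ)
    (hLip : ∀ j, ∀ u ∈ X, ∀ v ∈ X, |fi j u - fi j v| ≤ L * ‖u - v‖)
    (σ : Equiv.Perm (Fin n))
    (u : ℕ → EuclideanSpace ℝ (Fin d)) (hu1 : u 1 ∈ X)
    (g : ℕ → EuclideanSpace ℝ (Fin d))
    (hg : ∀ t (h1 : 1 ≤ t) (h2 : t ≤ n), ∀ w ∈ X,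
      fi (σ ⟨t - 1, by omega⟩) (u t) + (inner ℝ (g t) (w - u t) : ℝ)
        ≤ fi (σ ⟨t - 1, by omega⟩) w)
    (hgL : ∀ t, ‖g t‖ ≤ L)
    (hstep : ∀ t, 1 ≤ t → t ≤ n → u (t + 1) = P (u t - η • g t))
    (FS : EuclideanSpace ℝ (Fin d) → ℝ)
    (hFS : ∀ v, FS v = (1 / n : ℝ) * ∑ j, fi j v) :
    ∀ y ∈ X,
      η * (FS (u 1) - FS y)
        ≤ (1 / (2 * n) : ℝ) * (‖u 1 - y‖ ^ 2 - ‖u (n + 1) - y‖ ^ 2)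
          + η ^ 2 * L ^ 2 * ((n : ℝ) + 2) / 2 := by
  intro y hy
  have hepoch := two_mul_sum_sub_le_of_projected_steps (x := fun t => u (t + 1))
    (g := fun t => g (t + 1)) hXconvex (fun v => ⟨hPmem v, hPproj v⟩) hη (fun i => fi (σ i))
    (fun i => hLip (σ i)) (fun t => hgL (t + 1)) hu1
    (fun i => by simpa using hg (i + 1) (by omega) (by omega))
    (fun i => hstep (i + 1) (by omega) (by omega)) hy
  have hsum : ∑ i, (fi (σ i) (u 1) - fi (σ i) y) = n * (FS (u 1) - FS y) := by
    rw [sum_sub_distrib, Equiv.sum_comp σ (fun j => fi j (u 1)),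
      Equiv.sum_comp σ (fun j => fi j y), hFS, hFS]
    field_simp
  have hn_pos : (0 : ℝ) < n := Nat.cast_pos.2 hn
  calc η * (FS (u 1) - FS y) = 1 / (2 * n) * (2 * η * (n * (FS (u 1) - FS y))) := by
        field_simp
    _ ≤ 1 / (2 * n) * (‖u 1 - y‖ ^ 2 - ‖u (n + 1) - y‖ ^ 2 + (η * L * n) ^ 2) := by
        rw [← hsum]; gcongr
    _ = 1 / (2 * n) * (‖u 1 - y‖ ^ 2 - ‖u (n + 1) - y‖ ^ 2) + η ^ 2 * L ^ 2 * n / 2 := by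
        field_simp
    _ ≤ _ := by gcongr; linarith
end
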